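/- arXiv:2406.18932 — 5 statements merged into one kernel-verified Lean document; each statement's English description precedes it below -/
import Mathlib

section
/- Any polynomial p(x) = Σᵢ γᵢ · xⁱ · (x+1)^{n-2i} with all γᵢ ≥ 0 has unimodal coefficient sequence: writing p(x) = c₀ + c₁x + ... + cₙxⁿ, we have c₀ ≤ c₁ ≤ ... ≤ c_{⌊n/2⌋} and c_{⌈n/2⌉} ≥ ... ≥ cₙ. -/
open Polynomial

lemma choose_succ_le_of_le {m j : ℕ} (h : m ≤ 2 * j + 1) :
    m.choose (j + 1) ≤ m.choose j := by
  have h1 := Nat.choose_succ_right_eq m j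
  have h2 : m.choose (j + 1) * (j + 1) ≤ m.choose j * (j + 1) := by
    rw [h1]
    exact Nat.mul_le_mul_left _ (by omega)
  exact Nat.le_of_mul_le_mul_right h2 (by omega)

lemma coeff_term (a : ℝ) (i m k : ℕ) :
    (C a * X ^ i * (X + 1) ^ m).coeff k
      = a * (if i ≤ k then ((m.choose (k - i) : ℝ)) else 0) := by
  rw [mul_right_comm, coeff_mul_X_pow']
  split
  · rw [coeff_C_mul, coeff_X_add_one_pow]
  · simp

/-- Any polynomial `p(x) = ∑ᵢ γᵢ xⁱ (x+1)^{n-2i}` with all `γᵢ ≥ 0`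
(summing over `0 ≤ i ≤ n/2`) has a unimodal coefficient sequence:
writing `p = c₀ + c₁x + ⋯ + cₙxⁿ`, we have
`c₀ ≤ c₁ ≤ ⋯ ≤ c_{⌊n/2⌋}` and `c_{⌈n/2⌉} ≥ ⋯ ≥ cₙ`. -/
theorem stmt8 (n : ℕ) (γ : ℕ → ℝ) (hγ : ∀ i, 0 ≤ γ i) (p : Polynomial ℝ)
    (hp : p = ∑ i ∈ Finset.range (n / 2 + 1),
      C (γ i) * X ^ i * (X + 1) ^ (n - 2 * i)) :
    (∀ k, k < n / 2 → p.coeff k ≤ p.coeff (k + 1)) ∧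
      (∀ k, (n + 1) / 2 ≤ k → k < n → p.coeff (k + 1) ≤ p.coeff k) := by
  have hcoeff : ∀ k, p.coeff k = ∑ i ∈ Finset.range (n / 2 + 1),
      γ i * (if i ≤ k then (((n - 2 * i).choose (k - i) : ℝ)) else 0) := by
    intro k
    rw [hp, finset_sum_coeff]
    exact Finset.sum_congr rfl fun i _ => coeff_term _ _ _ _
  constructor
  · intro k hk
    rw [hcoeff, hcoeff]
    apply Finset.sum_le_sum
    intro i hi
    apply mul_le_mul_of_nonneg_left _ (hγ i)
    by_cases h1 : i ≤ k
    · rw [if_pos h1, if_pos (by omega)]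
      have : k + 1 - i = (k - i) + 1 := by omega
      rw [this]
      exact_mod_cast Nat.choose_le_succ_of_lt_half_left (by omega)
    · rw [if_neg h1]
      split
      · positivity
      · exact le_refl 0
  · intro k hk1 hk2
    rw [hcoeff, hcoeff]
    apply Finset.sum_le_sum
    intro i hi
    simp only [Finset.mem_range] at hi
    apply mul_le_mul_of_nonneg_left _ (hγ i)
    have h1 : i ≤ k := by omega
    rw [if_pos h1, if_pos (by omega)]
    have : k + 1 - i = (k - i) + 1 := by omega
    rw [this]
    exact_mod_cast choose_succ_le_of_le (by omega)
end

section
/- The number of maximal chains in the lattice Πₙ of set partitions of {1,...,n+1} whose max-of-min edge label sequence equals a given permutation σ of {2,...,n+1} is a₁·a₂·...·aₙ, where (a₁,...,aₙ) is the inversion sequence of σ given by aᵢ = #{j ≥ i : σⱼ ≤ σᵢ}. -/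
/-- The set partition lattice `Πₙ` of `{1,…,n+1}` is modeled as the lattice
`Setoid (Fin (n+1))` of equivalence relations ordered by refinement
(`⊥` = all singletons, `⊤` = one block).  An element `x` is the minimum of its
block in the partition `s` iff `x ≤ y` for all `y` related to `x`. -/
def IsBlockMin {m : ℕ} (s : Setoid (Fin m)) (x : Fin m) : Prop :=
  ∀ y : Fin m, s.r x y → x ≤ y

/-- A maximal chain in `Πₙ`: a saturated chain `F₀ = ⊥ ⋖ F₁ ⋖ ⋯ ⋖ Fₙ = ⊤`. -/
def IsMaxChain' {n : ℕ} (F : Fin (n + 1) → Setoid (Fin (n + 1))) : Prop :=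
  F 0 = ⊥ ∧ F (Fin.last n) = ⊤ ∧ ∀ i : Fin n, F i.castSucc ⋖ F i.succ

section Pair
variable {α : Type*}

def pairS (a b : α) : Setoid α where
  r x y := x = y ∨ (x = a ∧ y = b) ∨ (x = b ∧ y = a)
  iseqv := by
    refine ⟨fun x => Or.inl rfl, ?_, ?_⟩
    · rintro x y (h | ⟨h1, h2⟩ | ⟨h1, h2⟩)
      · exact Or.inl h.symm
      · exact Or.inr (Or.inr ⟨h2, h1⟩)
      · exact Or.inr (Or.inl ⟨h2, h1⟩)
    · rintro x y z (h | ⟨h1, h2⟩ | ⟨h1, h2⟩) (h' | ⟨h1', h2'⟩ | ⟨h1', h2'⟩) <;>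
        subst_vars <;> tauto

lemma pairS_rel (a b : α) : pairS a b a b := Or.inr (Or.inl ⟨rfl, rfl⟩)

lemma sup_pairS_rel (s : Setoid α) (a b x y : α) :
    (s ⊔ pairS a b) x y ↔ s x y ∨ (s x a ∧ s b y) ∨ (s x b ∧ s a y) := by
  set t : Setoid α :=
    { r := fun x y => s x y ∨ (s x a ∧ s b y) ∨ (s x b ∧ s a y)
      iseqv := by
        refine ⟨fun x => Or.inl (s.refl' x), ?_, ?_⟩
        · rintro x y (h | ⟨h1, h2⟩ | ⟨h1, h2⟩)
          · exact Or.inl (s.symm' h)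
          · exact Or.inr (Or.inr ⟨s.symm' h2, s.symm' h1⟩)
          · exact Or.inr (Or.inl ⟨s.symm' h2, s.symm' h1⟩)
        · rintro x y z (h | ⟨h1, h2⟩ | ⟨h1, h2⟩) (h' | ⟨h1', h2'⟩ | ⟨h1', h2'⟩)
          · exact Or.inl (s.trans' h h')
          · exact Or.inr (Or.inl ⟨s.trans' h h1', h2'⟩)
          · exact Or.inr (Or.inr ⟨s.trans' h h1', h2'⟩)
          · exact Or.inr (Or.inl ⟨h1, s.trans' h2 h'⟩)
          · exact Or.inl (s.trans' h1 (s.trans' (s.symm' (s.trans' h2 h1')) h2'))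
          · exact Or.inl (s.trans' h1 h2')
          · exact Or.inr (Or.inr ⟨h1, s.trans' h2 h'⟩)
          · exact Or.inl (s.trans' h1 h2')
          · exact Or.inl (s.trans' h1 (s.trans' (s.symm' (s.trans' h2 h1')) h2')) } with ht
  have heq : s ⊔ pairS a b = t := by
    apply le_antisymm
    · apply sup_le
      · intro x y h; exact Or.inl h
      · rintro x y (h | ⟨h1, h2⟩ | ⟨h1, h2⟩)
        · exact h ▸ Or.inl (s.refl' x)
        · exact Or.inr (Or.inl ⟨h1 ▸ s.refl' x, h2 ▸ s.refl' y⟩)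
        · exact Or.inr (Or.inr ⟨h1 ▸ s.refl' x, h2 ▸ s.refl' y⟩)
    · rintro x y (h | ⟨h1, h2⟩ | ⟨h1, h2⟩)
      · exact le_sup_left (a := s) (b := pairS a b) h
      · have hxa : (s ⊔ pairS a b) x a := le_sup_left (a := s) (b := pairS a b) h1
        have hab : (s ⊔ pairS a b) a b := le_sup_right (a := s) (b := pairS a b) (pairS_rel a b)
        have hby : (s ⊔ pairS a b) b y := le_sup_left (a := s) (b := pairS a b) h2
        exact (s ⊔ pairS a b).trans' hxa ((s ⊔ pairS a b).trans' hab hby)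
      · have hxb : (s ⊔ pairS a b) x b := le_sup_left (a := s) (b := pairS a b) h1
        have hba : (s ⊔ pairS a b) b a := (s ⊔ pairS a b).symm'
          (le_sup_right (a := s) (b := pairS a b) (pairS_rel a b))
        have hay : (s ⊔ pairS a b) a y := le_sup_left (a := s) (b := pairS a b) h2
        exact (s ⊔ pairS a b).trans' hxb ((s ⊔ pairS a b).trans' hba hay)
  rw [heq]; exact Iff.rfl

lemma cover_structure {s t : Setoid α} (h : s ⋖ t) :
    ∃ a b, ¬ s a b ∧ t = s ⊔ pairS a b := by
  obtain ⟨hlt, hmax⟩ := h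
  have hex : ∃ a b, t a b ∧ ¬ s a b := by
    by_contra hc
    push_neg at hc
    exact absurd (le_antisymm hlt.le fun x y hxy => hc x y hxy) hlt.ne
  obtain ⟨a, b, htab, hsab⟩ := hex
  refine ⟨a, b, hsab, ?_⟩
  have h1 : s < s ⊔ pairS a b := by
    refine lt_of_le_of_ne le_sup_left fun he => ?_
    exact hsab (he ▸ (le_sup_right (a := s) (b := pairS a b) (pairS_rel a b) : (s ⊔ pairS a b) a b))
  have h2 : s ⊔ pairS a b ≤ t := sup_le hlt.le (by
    rintro x y (h | ⟨h1', h2'⟩ | ⟨h1', h2'⟩)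
    · exact h ▸ t.refl' x
    · exact h1' ▸ h2' ▸ htab
    · exact h1' ▸ h2' ▸ t.symm' htab)
  rcases lt_or_eq_of_le h2 with h3 | h3
  · exact absurd h3 (hmax h1)
  · exact h3.symm

end Pair

section Root
variable {n : ℕ} (g m : Fin n → Fin (n + 1))

noncomputable def root (hg : ∀ j, g j < m j) (k : ℕ) (x : Fin (n + 1)) : Fin (n + 1) :=
  if h : ∃ j : Fin n, (j : ℕ) < k ∧ m j = x then root hg k (g (Classical.choose h)) else x
termination_by x.val
decreasing_by
  have h2 := Classical.choose_spec h
  have h3 := hg (Classical.choose h)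
  rw [h2.2] at h3
  exact h3

variable (hg : ∀ j, g j < m j) (hm : Function.Injective m)

lemma finStrongInd {N : ℕ} {P : Fin N → Prop}
    (h : ∀ x : Fin N, (∀ y : Fin N, y < x → P y) → P x) : ∀ x, P x := by
  have key : ∀ M : ℕ, ∀ x : Fin N, (x : ℕ) < M → P x := by
    intro M
    induction M with
    | zero => intro x hx; omega
    | succ M ih =>
        intro x hx
        refine h x fun y hy => ih y ?_
        have := (Fin.lt_def.mp hy)
        omega
  exact fun x => key ((x : ℕ) + 1) x (by omega)

lemma root_eq_self {k : ℕ} {x : Fin (n + 1)} (h : ¬ ∃ j : Fin n, (j : ℕ) < k ∧ m j = x) :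
    root g m hg k x = x := by
  rw [root.eq_def, dif_neg h]

include hm in
lemma root_eq_step {k : ℕ} {j : Fin n} (hj : (j : ℕ) < k) :
    root g m hg k (m j) = root g m hg k (g j) := by
  rw [root.eq_def]
  have h : ∃ j' : Fin n, (j' : ℕ) < k ∧ m j' = m j := ⟨j, hj, rfl⟩
  rw [dif_pos h]
  congr 1
  have h2 := Classical.choose_spec h
  exact congrArg g (hm h2.2)

include hm in
lemma root_le (k : ℕ) : ∀ x : Fin (n + 1), root g m hg k x ≤ x := by
  refine finStrongInd fun x ih => ?_
  by_cases h : ∃ j : Fin n, (j : ℕ) < k ∧ m j = x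
  · obtain ⟨j, hj, hmj⟩ := h
    subst hmj
    rw [root_eq_step g m hg hm hj]
    exact le_of_lt (lt_of_le_of_lt (ih (g j) (hg j)) (hg j))
  · rw [root_eq_self g m hg h]

include hm in
lemma root_isRoot (k : ℕ) :
    ∀ x : Fin (n + 1), ¬ ∃ j : Fin n, (j : ℕ) < k ∧ m j = root g m hg k x := by
  refine finStrongInd fun x ih => ?_
  by_cases h : ∃ j : Fin n, (j : ℕ) < k ∧ m j = x
  · obtain ⟨j, hj, hmj⟩ := h
    subst hmj
    rw [root_eq_step g m hg hm hj]
    exact ih (g j) (hg j)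
  · rw [root_eq_self g m hg h]; exact h

include hm in
lemma root_root (k : ℕ) (x : Fin (n + 1)) :
    root g m hg k (root g m hg k x) = root g m hg k x :=
  root_eq_self g m hg (root_isRoot g m hg hm k x)

include hm in
lemma root_eq_self_iff (k : ℕ) (x : Fin (n + 1)) :
    root g m hg k x = x ↔ ¬ ∃ j : Fin n, (j : ℕ) < k ∧ m j = x := by
  constructor
  · intro h
    rw [← h]
    exact root_isRoot g m hg hm k x
  · exact root_eq_self g m hg

include hm in
lemma root_lt_of_mem {k : ℕ} {x : Fin (n + 1)} (h : ∃ j : Fin n, (j : ℕ) < k ∧ m j = x) :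
    root g m hg k x < x := by
  obtain ⟨j, hj, hmj⟩ := h
  subst hmj
  rw [root_eq_step g m hg hm hj]
  exact lt_of_le_of_lt (root_le g m hg hm k (g j)) (hg j)

include hm in
/-- stability: if `x < m k` then time `k+1` root equals time `k` root. -/
lemma root_succ_of_lt {k : Fin n} : ∀ x : Fin (n + 1), x < m k →
    root g m hg ((k : ℕ) + 1) x = root g m hg (k : ℕ) x := by
  refine finStrongInd fun x ih hx => ?_
  by_cases h : ∃ j : Fin n, (j : ℕ) < (k : ℕ) ∧ m j = x
  · obtain ⟨j, hj, hmj⟩ := h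
    subst hmj
    rw [root_eq_step g m hg hm hj, root_eq_step g m hg hm (by omega : (j : ℕ) < (k : ℕ) + 1)]
    exact ih (g j) (hg j) (lt_trans (hg j) hx)
  · have h' : ¬ ∃ j : Fin n, (j : ℕ) < (k : ℕ) + 1 ∧ m j = x := by
      rintro ⟨j, hj, hmj⟩
      rcases Nat.lt_succ_iff_lt_or_eq.mp hj with hj' | hj'
      · exact h ⟨j, hj', hmj⟩
      · have hjk : j = k := Fin.ext hj'
        subst hjk
        exact (ne_of_lt hx).symm hmj
    rw [root_eq_self g m hg h, root_eq_self g m hg h']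

include hm in
/-- the step formula. -/
lemma root_succ {k : Fin n} : ∀ x : Fin (n + 1),
    root g m hg ((k : ℕ) + 1) x =
      if root g m hg (k : ℕ) x = m k then root g m hg (k : ℕ) (g k)
      else root g m hg (k : ℕ) x := by
  refine finStrongInd fun x ih => ?_
  by_cases h : ∃ j : Fin n, (j : ℕ) < (k : ℕ) ∧ m j = x
  · obtain ⟨j, hj, hmj⟩ := h
    subst hmj
    rw [root_eq_step g m hg hm hj, root_eq_step g m hg hm (by omega : (j : ℕ) < (k : ℕ) + 1)]
    exact ih (g j) (hg j)
  · by_cases hx : x = m k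
    · subst hx
      rw [root_eq_self g m hg h, if_pos rfl,
        root_eq_step g m hg hm (by omega : (k : ℕ) < (k : ℕ) + 1)]
      exact root_succ_of_lt g m hg hm (g k) (hg k)
    · have h' : ¬ ∃ j : Fin n, (j : ℕ) < (k : ℕ) + 1 ∧ m j = x := by
        rintro ⟨j, hj, hmj⟩
        rcases Nat.lt_succ_iff_lt_or_eq.mp hj with hj' | hj'
        · exact h ⟨j, hj', hmj⟩
        · have hjk : j = k := Fin.ext hj'
          subst hjk
          exact hx hmj.symm
      rw [root_eq_self g m hg h', root_eq_self g m hg h, if_neg hx]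

end Root

def IsBlockMin' {m : ℕ} (s : Setoid (Fin m)) (x : Fin m) : Prop :=
  ∀ y : Fin m, s x y → x ≤ y

section Mu
variable {N : ℕ}

attribute [local instance] Classical.propDecidable

lemma pairS_comm {α : Type*} (a b : α) : pairS a b = pairS b a := by
  apply Setoid.ext
  intro x y
  show _ ∨ _ ↔ _ ∨ _
  tauto

noncomputable def mu (s : Setoid (Fin N)) (x : Fin N) : Fin N :=
  (Finset.univ.filter fun y => s x y).min'
    ⟨x, Finset.mem_filter.mpr ⟨Finset.mem_univ x, s.refl' x⟩⟩

lemma mu_rel (s : Setoid (Fin N)) (x : Fin N) : s x (mu s x) :=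
  (Finset.mem_filter.mp ((Finset.univ.filter fun y => s x y).min'_mem _)).2

lemma mu_le (s : Setoid (Fin N)) {x y : Fin N} (h : s x y) : mu s x ≤ y :=
  Finset.min'_le _ y (Finset.mem_filter.mpr ⟨Finset.mem_univ y, h⟩)

lemma mu_congr (s : Setoid (Fin N)) {x y : Fin N} (h : s x y) : mu s x = mu s y := by
  unfold mu
  congr 1
  ext z
  simp only [Finset.mem_filter, Finset.mem_univ, true_and]
  exact ⟨fun hz => s.trans' (s.symm' h) hz, fun hz => s.trans' h hz⟩

lemma blockMin_iff_mu (s : Setoid (Fin N)) (x : Fin N) :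
    IsBlockMin' s x ↔ mu s x = x := by
  constructor
  · intro h
    exact le_antisymm (mu_le s (s.refl' x)) (h _ (mu_rel s x))
  · intro h y hy
    rw [← h]
    exact mu_le s hy

lemma mu_blockMin (s : Setoid (Fin N)) (x : Fin N) : IsBlockMin' s (mu s x) := by
  rw [blockMin_iff_mu]
  rw [mu_congr s (s.symm' (mu_rel s x))]

/-- step analysis for a cover `t = s ⊔ pair a b` with `mu s a < mu s b`. -/
lemma coverStep {s t : Setoid (Fin N)} {a b : Fin N} (hnab : ¬ s a b)
    (ht : t = s ⊔ pairS a b) (hpq : mu s a < mu s b) :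
    IsBlockMin' s (mu s b) ∧ ¬ IsBlockMin' t (mu s b) ∧ mu t (mu s b) = mu s a := by
  subst ht
  have hqb : s b (mu s b) := mu_rel s b
  have hpa : s a (mu s a) := mu_rel s a
  have htqp : (s ⊔ pairS a b) (mu s b) (mu s a) :=
    (sup_pairS_rel s a b _ _).mpr (Or.inr (Or.inr ⟨s.symm' hqb, hpa⟩))
  refine ⟨mu_blockMin s b, ?_, ?_⟩
  · intro hbm
    exact absurd (hbm _ htqp) (not_le_of_gt hpq)
  · refine le_antisymm (mu_le _ htqp) ?_
    have hmem := mu_rel (s ⊔ pairS a b) (mu s b)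
    rcases (sup_pairS_rel s a b _ _).mp hmem with h | ⟨h1, h2⟩ | ⟨h1, h2⟩
    · exact le_trans (le_of_lt hpq) ((mu_blockMin s b) _ h)
    · exact absurd (s.trans' (s.symm' h1) (s.symm' hqb)) hnab
    · exact mu_le s h2

end Mu

section Chain
variable {n : ℕ} (g m : Fin n → Fin (n + 1)) (hg : ∀ j, g j < m j) (hm : Function.Injective m)

include hm in
lemma mu_kerRoot (k : ℕ) (x : Fin (n + 1)) :
    mu (Setoid.ker (root g m hg k)) x = root g m hg k x := by
  apply le_antisymm
  · refine mu_le _ ?_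
    show root g m hg k x = root g m hg k (root g m hg k x)
    exact (root_root g m hg hm k x).symm
  · have h1 : root g m hg k x = root g m hg k (mu (Setoid.ker (root g m hg k)) x) :=
      mu_rel (Setoid.ker (root g m hg k)) x
    rw [h1]
    exact root_le g m hg hm k _

include hm in
lemma blockMin_kerRoot (k : ℕ) (x : Fin (n + 1)) :
    IsBlockMin' (Setoid.ker (root g m hg k)) x ↔ root g m hg k x = x := by
  rw [blockMin_iff_mu, mu_kerRoot g m hg hm]

lemma kerRoot_rel {k : ℕ} {x y : Fin (n + 1)} :
    (Setoid.ker (root g m hg k)) x y ↔ root g m hg k x = root g m hg k y :=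
  Iff.rfl

lemma kerRoot_zero : Setoid.ker (root g m hg 0) = ⊥ := by
  apply Setoid.ext
  intro x y
  rw [kerRoot_rel]
  have hx : root g m hg 0 x = x := root_eq_self g m hg (by rintro ⟨j, hj, -⟩; omega)
  have hy : root g m hg 0 y = y := root_eq_self g m hg (by rintro ⟨j, hj, -⟩; omega)
  rw [hx, hy, show ⇑(⊥ : Setoid (Fin (n + 1))) = (· = ·) from Setoid.bot_def]

include hm in
lemma kerRoot_top (hsurj : ∀ x : Fin (n + 1), x ≠ 0 → ∃ j : Fin n, m j = x) :
    Setoid.ker (root g m hg n) = ⊤ := by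
  have hzero : ∀ x : Fin (n + 1), root g m hg n x = 0 := by
    refine finStrongInd fun x ih => ?_
    by_cases hx : x = 0
    · subst hx
      apply root_eq_self
      rintro ⟨j, hj, hmj⟩
      have := hg j
      have : (0 : Fin (n + 1)) ≤ g j := Fin.zero_le _
      have h2 := lt_of_le_of_lt this (hg j)
      rw [hmj] at h2
      exact absurd h2 (lt_irrefl 0)
    · obtain ⟨j, hmj⟩ := hsurj x hx
      subst hmj
      rw [root_eq_step g m hg hm j.isLt]
      exact ih (g j) (hg j)
  apply Setoid.ext
  intro x y
  rw [kerRoot_rel, hzero, hzero, show ⇑(⊤ : Setoid (Fin (n + 1))) = ⊤ from Setoid.top_def]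
  simp

include hm in
lemma kerRoot_cover (k : Fin n) :
    Setoid.ker (root g m hg (k : ℕ)) ⋖ Setoid.ker (root g m hg ((k : ℕ) + 1)) := by
  have hmk : root g m hg (k : ℕ) (m k) = m k := by
    apply root_eq_self
    rintro ⟨j, hj, hmj⟩
    have : j = k := hm hmj
    omega
  have hgk_ne : root g m hg (k : ℕ) (g k) ≠ m k := by
    intro h
    have := lt_of_le_of_lt (root_le g m hg hm (k : ℕ) (g k)) (hg k)
    rw [h] at this
    exact lt_irrefl _ this
  have hsucc : ∀ x, root g m hg ((k : ℕ) + 1) x =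
      if root g m hg (k : ℕ) x = m k then root g m hg (k : ℕ) (g k)
      else root g m hg (k : ℕ) x := root_succ g m hg hm
  constructor
  · -- strict inequality
    constructor
    · intro x y h
      rw [kerRoot_rel] at h ⊢
      rw [hsucc, hsucc, h]
    · intro hle
      have h1 : (Setoid.ker (root g m hg ((k : ℕ) + 1))) (m k) (g k) := by
        rw [kerRoot_rel, hsucc, hsucc, hmk, if_pos rfl, if_neg hgk_ne]
      have h2 := hle h1
      rw [kerRoot_rel, hmk] at h2
      exact hgk_ne h2.symm
  · -- maximality
    intro u hu hut
    apply hut.ne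
    have hle : Setoid.ker (root g m hg (k : ℕ)) ≤ u := hu.le
    have hwit : ∃ x y, u x y ∧ root g m hg (k : ℕ) x ≠ root g m hg (k : ℕ) y := by
      by_contra hc
      push_neg at hc
      exact absurd (le_antisymm hu.le fun x y hxy => hc x y hxy) hu.ne
    obtain ⟨x, y, huxy, hxy⟩ := hwit
    have hxy1 : root g m hg ((k : ℕ) + 1) x = root g m hg ((k : ℕ) + 1) y := hut.le huxy
    -- u relates m k and g k
    have key : u (m k) (g k) := by
      have hcase : (root g m hg (k : ℕ) x = m k ∧ root g m hg (k : ℕ) y ≠ m k) ∨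
          (root g m hg (k : ℕ) y = m k ∧ root g m hg (k : ℕ) x ≠ m k) := by
        rw [hsucc, hsucc] at hxy1
        by_cases cx : root g m hg (k : ℕ) x = m k <;>
          by_cases cy : root g m hg (k : ℕ) y = m k <;>
          simp [cx, cy] at hxy1 ⊢
        · exact hxy (cx.trans cy.symm)
        · exact hxy hxy1
      have main : ∀ x y : Fin (n + 1), u x y → root g m hg (k : ℕ) x = m k →
          root g m hg (k : ℕ) y ≠ m k → u (m k) (g k) := by
        intro x y huxy' cx cy
        have hxy1' : root g m hg ((k : ℕ) + 1) x = root g m hg ((k : ℕ) + 1) y := hut.le huxy'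
        rw [hsucc, hsucc, if_pos cx, if_neg cy] at hxy1'
        have h1 : u (m k) x := hle (by rw [kerRoot_rel, hmk, cx])
        have h2 : u y (g k) := hle (by rw [kerRoot_rel, ← hxy1'])
        exact u.trans' h1 (u.trans' huxy' h2)
      rcases hcase with ⟨cx, cy⟩ | ⟨cy, cx⟩
      · exact main x y huxy cx cy
      · exact main y x (u.symm' huxy) cy cx
    -- now u = ker (root (k+1))
    apply le_antisymm hut.le
    intro a b hab
    rw [kerRoot_rel, hsucc, hsucc] at hab
    by_cases ca : root g m hg (k : ℕ) a = m k <;> by_cases cb : root g m hg (k : ℕ) b = m k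
    · exact hle (by rw [kerRoot_rel, ca, cb])
    · rw [if_pos ca, if_neg cb] at hab
      have h1 : u a (m k) := hle (by rw [kerRoot_rel, ca, hmk])
      have h2 : u (g k) b := hle (by rw [kerRoot_rel, hab])
      exact u.trans' h1 (u.trans' key h2)
    · rw [if_neg ca, if_pos cb] at hab
      have h1 : u a (g k) := hle (by rw [kerRoot_rel, hab])
      have h2 : u (m k) b := hle (by rw [kerRoot_rel, hmk, cb])
      exact u.trans' h1 (u.trans' (u.symm' key) h2)
    · rw [if_neg ca, if_neg cb] at hab
      exact hle (by rw [kerRoot_rel, hab])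

include hm in
lemma kerRoot_label (k : Fin n) (x : Fin (n + 1))
    (h1 : IsBlockMin' (Setoid.ker (root g m hg (k : ℕ))) x)
    (h2 : ¬ IsBlockMin' (Setoid.ker (root g m hg ((k : ℕ) + 1))) x) : x = m k := by
  rw [blockMin_kerRoot g m hg hm] at h1 h2
  rw [root_succ g m hg hm, h1] at h2
  by_cases hx : x = m k
  · exact hx
  · rw [if_neg hx] at h2
    exact absurd rfl h2

end Chain

section Backward
variable {n : ℕ} (m : Fin n → Fin (n + 1)) (hm : Function.Injective m)
variable (F : Fin (n + 1) → Setoid (Fin (n + 1)))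

include hm in
lemma backward_step
    (hcov : ∀ i : Fin n, F i.castSucc ⋖ F i.succ)
    (hlab : ∀ i : Fin n, ∀ x, IsBlockMin' (F i.castSucc) x →
      ¬ IsBlockMin' (F i.succ) x → x = m i) (i : Fin n) :
    mu (F i.succ) (m i) < m i ∧
    IsBlockMin' (F i.castSucc) (mu (F i.succ) (m i)) ∧
    ∀ x y, F i.succ x y ↔ (F i.castSucc x y ∨
      (F i.castSucc x (mu (F i.succ) (m i)) ∧ F i.castSucc (m i) y) ∨
      (F i.castSucc x (m i) ∧ F i.castSucc (mu (F i.succ) (m i)) y)) := by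
  obtain ⟨a, b, hnab, ht⟩ := cover_structure (hcov i)
  set s := F i.castSucc with hs
  have hne : mu s a ≠ mu s b := by
    intro h
    exact hnab (s.trans' (mu_rel s a) (h ▸ s.symm' (mu_rel s b)))
  -- order so that mu s a' < mu s b'
  obtain ⟨a', b', hnab', ht', hlt⟩ :
      ∃ a' b', ¬ s a' b' ∧ F i.succ = s ⊔ pairS a' b' ∧ mu s a' < mu s b' := by
    rcases lt_or_gt_of_ne hne with h | h
    · exact ⟨a, b, hnab, ht, h⟩
    · exact ⟨b, a, fun hba => hnab (s.symm' hba), by rw [ht, pairS_comm], h⟩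
  clear hne hnab ht
  obtain ⟨hbmq, hnbmq, hmut⟩ := coverStep hnab' ht' hlt
  have hq : mu s b' = m i := hlab i _ hbmq hnbmq
  have hmui : mu (F i.succ) (m i) = mu s a' := by rw [← hq]; exact hmut
  rw [hq] at hlt
  refine ⟨hmui ▸ hlt, hmui ▸ mu_blockMin s a', ?_⟩
  intro x y
  rw [hmui, ht', sup_pairS_rel]
  constructor
  · rintro (h | ⟨h1, h2⟩ | ⟨h1, h2⟩)
    · exact Or.inl h
    · exact Or.inr (Or.inl ⟨s.trans' h1 (mu_rel s a'), s.trans' (hq ▸ s.symm' (mu_rel s b')) h2⟩)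
    · exact Or.inr (Or.inr ⟨s.trans' h1 (hq ▸ mu_rel s b'), s.trans' (s.symm' (mu_rel s a')) h2⟩)
  · rintro (h | ⟨h1, h2⟩ | ⟨h1, h2⟩)
    · exact Or.inl h
    · exact Or.inr (Or.inl ⟨s.trans' h1 (s.symm' (mu_rel s a')),
        s.trans' (hq ▸ (mu_rel s b' : s b' (mu s b'))) h2⟩)
    · exact Or.inr (Or.inr ⟨s.trans' h1 (hq ▸ s.symm' (mu_rel s b' : s b' (mu s b'))),
        s.trans' (mu_rel s a') h2⟩)

include hm in
lemma backward_main
    (hbot : F 0 = ⊥)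
    (hcov : ∀ i : Fin n, F i.castSucc ⋖ F i.succ)
    (hlab : ∀ i : Fin n, ∀ x, IsBlockMin' (F i.castSucc) x →
      ¬ IsBlockMin' (F i.succ) x → x = m i)
    (hg : ∀ j : Fin n, mu (F j.succ) (m j) < m j) :
    ∀ k : Fin (n + 1),
      F k = Setoid.ker (root (fun j => mu (F j.succ) (m j)) m hg (k : ℕ)) := by
  set g : Fin n → Fin (n + 1) := fun j => mu (F j.succ) (m j) with hgdef
  have key : ∀ t : ℕ, ∀ ht : t ≤ n, F ⟨t, by omega⟩ = Setoid.ker (root g m hg t) := by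
    intro t
    induction t with
    | zero =>
        intro ht
        have h0 : (⟨0, by omega⟩ : Fin (n + 1)) = 0 := by ext; simp
        rw [h0, hbot, kerRoot_zero]
    | succ t ih =>
        intro ht
        have ih' := ih (by omega)
        set i : Fin n := ⟨t, by omega⟩ with hidef
        have hcs : i.castSucc = (⟨t, by omega⟩ : Fin (n + 1)) := by ext; simp; rfl
        have hsc : i.succ = (⟨t + 1, by omega⟩ : Fin (n + 1)) := by ext; simp; rfl
        have hFcs : F i.castSucc = Setoid.ker (root g m hg t) := by rw [hcs]; exact ih'
        obtain ⟨hlt', hbm, hrel⟩ := backward_step m hm F hcov hlab i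
        set p : Fin (n + 1) := mu (F i.succ) (m i) with hpdef
        have hr : ∀ a b : Fin (n + 1),
            F i.castSucc a b ↔ root g m hg t a = root g m hg t b := by
          intro a b; rw [hFcs]; exact Iff.rfl
        have hp_fix : root g m hg t p = p := by
          rw [hFcs, blockMin_kerRoot g m hg hm] at hbm
          exact hbm
        have hmi_fix : root g m hg t (m i) = m i := by
          apply root_eq_self
          rintro ⟨j, hj, hmj⟩
          have : j = i := hm hmj
          subst this
          simp [hidef] at hj
        have hpne : p ≠ m i := ne_of_lt hlt'
        have hgp : root g m hg t (g i) = p := hp_fix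
        have hti : ((i : ℕ) : ℕ) = t := rfl
        rw [← hsc]
        apply Setoid.ext
        intro x y
        refine (hrel x y).trans ?_
        have hx' : root g m hg (t + 1) x =
            if root g m hg t x = m i then root g m hg t (g i) else root g m hg t x :=
          root_succ g m hg hm (k := i) x
        have hy' : root g m hg (t + 1) y =
            if root g m hg t y = m i then root g m hg t (g i) else root g m hg t y :=
          root_succ g m hg hm (k := i) y
        show _ ↔ root g m hg (t + 1) x = root g m hg (t + 1) y
        rw [hx', hy', hgp, hr, hr, hr, hr, hr, hmi_fix, hp_fix]
        by_cases c1 : root g m hg t x = m i <;> by_cases c2 : root g m hg t y = m i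
        · rw [if_pos c1, if_pos c2]
          exact ⟨fun _ => rfl, fun _ => Or.inl (c1.trans c2.symm)⟩
        · rw [if_pos c1, if_neg c2]
          constructor
          · rintro (h | ⟨h1, h2⟩ | ⟨h1, h2⟩)
            · exact absurd (h.symm.trans c1) c2
            · exact absurd h2.symm c2
            · exact h2
          · exact fun h => Or.inr (Or.inr ⟨c1, h⟩)
        · rw [if_neg c1, if_pos c2]
          constructor
          · rintro (h | ⟨h1, h2⟩ | ⟨h1, h2⟩)
            · exact absurd (h.trans c2) c1
            · exact h1
            · exact absurd h1 c1
          · exact fun h => Or.inr (Or.inl ⟨h, c2.symm⟩)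
        · rw [if_neg c1, if_neg c2]
          constructor
          · rintro (h | ⟨h1, h2⟩ | ⟨h1, h2⟩)
            · exact h
            · exact absurd h2.symm c2
            · exact absurd h1 c1
          · exact fun h => Or.inl h
  intro k
  have hk : k = ⟨(k : ℕ), by omega⟩ := by ext; simp
  rw [hk]
  exact key (k : ℕ) (by omega)

end Backward

section Count
open Finset

attribute [local instance] Classical.propDecidable

lemma card_S {n : ℕ} (σ : Fin n → ℕ) (hinj : Function.Injective σ)
    (hmem : ∀ i, σ i ∈ Finset.Icc 2 (n + 1)) (m : Fin n → Fin (n + 1))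
    (hmval : ∀ i, (m i : ℕ) = σ i - 1) (i : Fin n) :
    (Finset.univ.filter fun x : Fin (n + 1) => x < m i ∧ ∀ j, j < i → m j ≠ x).card
      = (Finset.univ.filter fun j : Fin n => i ≤ j ∧ σ j ≤ σ i).card := by
  have hσ : ∀ j, 2 ≤ σ j ∧ σ j ≤ n + 1 := by
    intro j; have := hmem j; rw [Finset.mem_Icc] at this; exact this
  have hm : Function.Injective m := by
    intro a b hab
    apply hinj
    have ha := hσ a; have hb := hσ b
    have : (m a : ℕ) = (m b : ℕ) := by rw [hab]
    rw [hmval, hmval] at this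
    omega
  have himg : Finset.univ.image σ = Finset.Icc 2 (n + 1) := by
    apply Finset.eq_of_subset_of_card_le
    · intro v hv
      rw [Finset.mem_image] at hv
      obtain ⟨j, -, rfl⟩ := hv
      exact hmem j
    · rw [Nat.card_Icc, Finset.card_image_of_injective _ hinj, Finset.card_univ,
        Fintype.card_fin]
      omega
  have hmlt : ∀ j, m j < m i ↔ σ j < σ i := by
    intro j
    rw [Fin.lt_def, hmval, hmval]
    have := hσ j; have := hσ i
    omega
  set B' : Finset (Fin n) := Finset.univ.filter fun j => j < i ∧ σ j < σ i with hB'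
  set R : Finset (Fin n) := Finset.univ.filter fun j => i ≤ j ∧ σ j ≤ σ i with hR
  set T : Finset (Fin n) := Finset.univ.filter fun j => σ j ≤ σ i with hT
  -- LHS
  have hset : (Finset.univ.filter fun x : Fin (n + 1) => x < m i ∧ ∀ j, j < i → m j ≠ x)
      = Finset.Iio (m i) \ (Finset.Iio i).image m := by
    ext x
    simp only [Finset.mem_filter, Finset.mem_univ, true_and, Finset.mem_sdiff,
      Finset.mem_Iio, Finset.mem_image, not_exists]
    constructor
    · rintro ⟨h1, h2⟩
      exact ⟨h1, fun j => by
        intro hj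
        rcases hj with ⟨hj1, hj2⟩
        exact (h2 j hj1) hj2⟩
    · rintro ⟨h1, h2⟩
      refine ⟨h1, fun j hj hmj => ?_⟩
      exact h2 j ⟨hj, hmj⟩
  have hinter : Finset.Iio (m i) ∩ (Finset.Iio i).image m = B'.image m := by
    ext x
    simp only [Finset.mem_inter, Finset.mem_Iio, Finset.mem_image, hB', Finset.mem_filter,
      Finset.mem_univ, true_and]
    constructor
    · rintro ⟨h1, j, hj, rfl⟩
      exact ⟨j, ⟨hj, (hmlt j).mp h1⟩, rfl⟩
    · rintro ⟨j, ⟨hj1, hj2⟩, rfl⟩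
      exact ⟨(hmlt j).mpr hj2, j, hj1, rfl⟩
  have hLHS : (Finset.univ.filter fun x : Fin (n + 1) =>
      x < m i ∧ ∀ j, j < i → m j ≠ x).card = (m i : ℕ) - B'.card := by
    rw [hset, ← Finset.sdiff_inter_self_left, Finset.card_sdiff_of_subset Finset.inter_subset_left,
      hinter, Finset.card_image_of_injective _ hm]
    rw [Fin.card_Iio]
  -- RHS
  have hunion : R ∪ B' = T := by
    ext j
    simp only [hR, hB', hT, Finset.mem_union, Finset.mem_filter, Finset.mem_univ, true_and]
    constructor
    · rintro (⟨h1, h2⟩ | ⟨h1, h2⟩)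
      · exact h2
      · exact le_of_lt h2
    · intro h
      by_cases hij : i ≤ j
      · exact Or.inl ⟨hij, h⟩
      · refine Or.inr ⟨lt_of_not_ge hij, lt_of_le_of_ne h fun he => ?_⟩
        exact (ne_of_lt (lt_of_not_ge hij)) (hinj he)
  have hdisj : Disjoint R B' := by
    rw [Finset.disjoint_left]
    intro j hj1 hj2
    simp only [hR, hB', Finset.mem_filter, Finset.mem_univ, true_and] at hj1 hj2
    exact absurd hj2.1 (not_lt_of_ge hj1.1)
  have hTcard : T.card = σ i - 1 := by
    have h1 : T.card = (T.image σ).card := (Finset.card_image_of_injective _ hinj).symm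
    have h2 : T.image σ = (Finset.univ.image σ).filter (· ≤ σ i) := by
      ext v
      simp only [Finset.mem_image, Finset.mem_filter, hT, Finset.mem_univ, true_and]
      constructor
      · rintro ⟨j, hj, rfl⟩
        exact ⟨⟨j, rfl⟩, hj⟩
      · rintro ⟨⟨j, rfl⟩, hj⟩
        exact ⟨j, hj, rfl⟩
    have h3 : (Finset.Icc 2 (n + 1)).filter (· ≤ σ i) = Finset.Icc 2 (σ i) := by
      ext v
      simp only [Finset.mem_filter, Finset.mem_Icc]
      have := hσ i
      omega
    rw [h1, h2, himg, h3, Nat.card_Icc]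
    omega
  have hRcard : R.card + B'.card = σ i - 1 := by
    rw [← hTcard, ← hunion, Finset.card_union_of_disjoint hdisj]
  rw [hLHS, hmval i]
  omega

end Count

/-- In the cover `Fᵢ ⋖ Fᵢ₊₁` two blocks `B, B'` are merged; its max-of-min
label is `max{min B, min B'}`, i.e. the unique element (shifted by `+1`, since
`Fin (n+1) = {0,…,n}` models `{1,…,n+1}`) that is a block minimum of `Fᵢ` but
not of `Fᵢ₊₁`.  The number of maximal chains of `Πₙ` whose max-of-min label
sequence is a given permutation `σ` of `{2,…,n+1}` equals the product
`a₁⋯aₙ` of the entries of the inversion sequence of `σ`. -/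
theorem stmt9 (n : ℕ) (σ : Fin n → ℕ) (hinj : Function.Injective σ)
    (hmem : ∀ i, σ i ∈ Finset.Icc 2 (n + 1)) :
    Nat.card {F : Fin (n + 1) → Setoid (Fin (n + 1)) //
        IsMaxChain' F ∧ ∀ i : Fin n, ∀ x : Fin (n + 1),
          IsBlockMin (F i.castSucc) x → ¬ IsBlockMin (F i.succ) x →
            (x : ℕ) + 1 = σ i} =
      ∏ i : Fin n,
        (Finset.univ.filter fun j : Fin n => i ≤ j ∧ σ j ≤ σ i).card := by
  classical
  have hσ : ∀ j, 2 ≤ σ j ∧ σ j ≤ n + 1 := fun j => by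
    have := hmem j; rw [Finset.mem_Icc] at this; exact this
  set m : Fin n → Fin (n + 1) := fun i => ⟨σ i - 1, by have := hσ i; omega⟩ with hmdef
  have hmval : ∀ i, (m i : ℕ) = σ i - 1 := fun i => rfl
  have hm : Function.Injective m := by
    intro a b hab
    apply hinj
    have h := congrArg Fin.val hab
    have := hσ a; have := hσ b
    simp only [hmval] at h
    omega
  have himg : Finset.univ.image σ = Finset.Icc 2 (n + 1) := by
    apply Finset.eq_of_subset_of_card_le
    · intro v hv
      rw [Finset.mem_image] at hv
      obtain ⟨j, -, rfl⟩ := hv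
      exact hmem j
    · rw [Nat.card_Icc, Finset.card_image_of_injective _ hinj, Finset.card_univ,
        Fintype.card_fin]
      omega
  have hsurj : ∀ x : Fin (n + 1), x ≠ 0 → ∃ j : Fin n, m j = x := by
    intro x hx
    have hx1 : 1 ≤ (x : ℕ) := by
      rcases Nat.eq_zero_or_pos (x : ℕ) with h | h
      · exact absurd (Fin.ext h : x = 0) hx
      · exact h
    have hx2 : (x : ℕ) + 1 ∈ Finset.Icc 2 (n + 1) := by
      rw [Finset.mem_Icc]
      have := x.isLt
      omega
    rw [← himg, Finset.mem_image] at hx2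
    obtain ⟨j, -, hj⟩ := hx2
    exact ⟨j, Fin.ext (by rw [hmval, hj]; omega)⟩
  have hbm : ∀ (s : Setoid (Fin (n + 1))) (x : Fin (n + 1)),
      IsBlockMin s x ↔ IsBlockMin' s x := fun s x => Iff.rfl
  set S : Fin n → Finset (Fin (n + 1)) :=
    fun i => Finset.univ.filter fun x => x < m i ∧ ∀ j, j < i → m j ≠ x with hSdef
  set P : (Fin (n + 1) → Setoid (Fin (n + 1))) → Prop :=
    fun F => IsMaxChain' F ∧ ∀ i : Fin n, ∀ x : Fin (n + 1),
      IsBlockMin (F i.castSucc) x → ¬ IsBlockMin (F i.succ) x →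
        (x : ℕ) + 1 = σ i with hPdef
  -- label translation
  have hlab' : ∀ F : Fin (n + 1) → Setoid (Fin (n + 1)), P F →
      ∀ i : Fin n, ∀ x, IsBlockMin' (F i.castSucc) x →
        ¬ IsBlockMin' (F i.succ) x → x = m i := by
    intro F hF i x h1 h2
    have := hF.2 i x ((hbm _ _).mpr h1) (fun hc => h2 ((hbm _ _).mp hc))
    exact Fin.ext (by rw [hmval]; omega)
  -- step data for any good chain
  have hstep : ∀ F : Fin (n + 1) → Setoid (Fin (n + 1)), P F →
      ∀ j : Fin n, mu (F j.succ) (m j) < m j :=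
    fun F hF j => (backward_step m hm F hF.1.2.2 (hlab' F hF) j).1
  have hfresh : ∀ F : Fin (n + 1) → Setoid (Fin (n + 1)), (hF : P F) →
      ∀ i : Fin n, ∀ j : Fin n, j < i → m j ≠ mu (F i.succ) (m i) := by
    intro F hF i j hj hc
    have hmain := backward_main m hm F hF.1.1 hF.1.2.2 (hlab' F hF) (hstep F hF)
    have hbmin := (backward_step m hm F hF.1.2.2 (hlab' F hF) i).2.1
    rw [hmain i.castSucc] at hbmin
    have hfix : root (fun j => mu (F j.succ) (m j)) m (hstep F hF) ((i.castSucc : ℕ))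
        (mu (F i.succ) (m i)) = mu (F i.succ) (m i) :=
      (blockMin_kerRoot _ m _ hm _ _).mp hbmin
    have := (root_eq_self_iff _ m _ hm _ _).mp hfix
    exact this ⟨j, by simpa using (Fin.lt_def.mp hj), hc⟩
  -- the equivalence
  have e : {F : Fin (n + 1) → Setoid (Fin (n + 1)) // P F} ≃ (∀ i : Fin n, {x // x ∈ S i}) := by
    refine
      { toFun := fun F i => ⟨mu (F.1 i.succ) (m i), ?_⟩
        invFun := fun gg =>
          ⟨fun k => Setoid.ker (root (fun j => (gg j : Fin (n + 1))) m
            (fun j => (Finset.mem_filter.mp (gg j).2).2.1) (k : ℕ)), ?_⟩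
        left_inv := ?_
        right_inv := ?_ }
    · rw [hSdef, Finset.mem_filter]
      exact ⟨Finset.mem_univ _, hstep F.1 F.2 i, fun j hj => hfresh F.1 F.2 i j hj⟩
    · set g : Fin n → Fin (n + 1) := fun j => (gg j : Fin (n + 1)) with hgdef
      have hg : ∀ j, g j < m j := fun j => (Finset.mem_filter.mp (gg j).2).2.1
      refine ⟨⟨?_, ?_, ?_⟩, ?_⟩
      · simp only [Fin.val_zero]
        exact kerRoot_zero g m hg
      · simp only [Fin.val_last]
        exact kerRoot_top g m hg hm hsurj
      · intro i
        simp only [Fin.coe_castSucc, Fin.val_succ]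
        exact kerRoot_cover g m hg hm i
      · intro i x h1 h2
        rw [hbm] at h1 h2
        simp only [Fin.coe_castSucc] at h1
        simp only [Fin.val_succ] at h2
        have hx := kerRoot_label g m hg hm i x h1 h2
        rw [hx, hmval]
        have := hσ i
        omega
    · intro F
      apply Subtype.ext
      funext k
      exact (backward_main m hm F.1 F.2.1.1 F.2.1.2.2 (hlab' F.1 F.2) (hstep F.1 F.2) k).symm
    · intro gg
      funext i
      apply Subtype.ext
      set g : Fin n → Fin (n + 1) := fun j => (gg j : Fin (n + 1)) with hgdef
      have hg : ∀ j, g j < m j := fun j => (Finset.mem_filter.mp (gg j).2).2.1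
      show mu (Setoid.ker (root g m hg ((i.succ : ℕ)))) (m i) = g i
      have hfreshi : ∀ j : Fin n, j < i → m j ≠ g i :=
        fun j hj => (Finset.mem_filter.mp (gg i).2).2.2 j hj
      have h1 : ((i.succ : ℕ)) = (i : ℕ) + 1 := rfl
      rw [h1, mu_kerRoot g m hg hm]
      have hmi_fix : root g m hg (i : ℕ) (m i) = m i := by
        apply root_eq_self
        rintro ⟨j, hj, hmj⟩
        have : j = i := hm hmj
        omega
      rw [root_succ g m hg hm (k := i) (m i), hmi_fix, if_pos rfl]
      apply root_eq_self
      rintro ⟨j, hj, hmj⟩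
      exact hfreshi j (Fin.lt_def.mpr hj) hmj
  rw [Nat.card_congr e, Nat.card_pi]
  refine Finset.prod_congr rfl fun i _ => ?_
  rw [Nat.card_eq_finsetCard]
  exact card_S σ hinj hmem m hmval i
end

section
/- The max-of-min edge labeling of the set partition lattice Πₙ is an R-labeling: every interval [P, Q] in Πₙ contains a unique maximal chain along which the edge labels weakly increase. -/
noncomputable def maxOfMinLabel {m : ℕ} (s t : Setoid (Fin m)) : ℕ :=
  sSup {k : ℕ | ∃ x : Fin m, IsBlockMin s x ∧ ¬ IsBlockMin t x ∧ k = (x : ℕ) + 1}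

namespace Stmt11
open scoped Classical
variable {m : ℕ}

/-- merge the blocks of `a` and `b`. -/
def merge (s : Setoid (Fin m)) (a b : Fin m) : Setoid (Fin m) where
  r x y := s.r x y ∨ (s.r x a ∧ s.r b y) ∨ (s.r x b ∧ s.r a y)
  iseqv := by
    constructor
    · intro x; exact Or.inl (s.refl x)
    · rintro x y (h | ⟨h1, h2⟩ | ⟨h1, h2⟩)
      · exact Or.inl (s.symm h)
      · exact Or.inr (Or.inr ⟨s.symm h2, s.symm h1⟩)
      · exact Or.inr (Or.inl ⟨s.symm h2, s.symm h1⟩)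
    · rintro x y z (h1 | ⟨h1, h2⟩ | ⟨h1, h2⟩) (g1 | ⟨g1, g2⟩ | ⟨g1, g2⟩)
      · exact Or.inl (s.trans h1 g1)
      · exact Or.inr (Or.inl ⟨s.trans h1 g1, g2⟩)
      · exact Or.inr (Or.inr ⟨s.trans h1 g1, g2⟩)
      · exact Or.inr (Or.inl ⟨h1, s.trans h2 g1⟩)
      · exact Or.inl (s.trans h1 (s.trans (s.symm (s.trans h2 g1)) g2))
      · exact Or.inl (s.trans h1 g2)
      · exact Or.inr (Or.inr ⟨h1, s.trans h2 g1⟩)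
      · exact Or.inl (s.trans h1 g2)
      · exact Or.inl (s.trans h1 (s.trans (s.symm (s.trans h2 g1)) g2))

lemma merge_r {s : Setoid (Fin m)} {a b x y : Fin m} :
    (merge s a b).r x y ↔ s.r x y ∨ (s.r x a ∧ s.r b y) ∨ (s.r x b ∧ s.r a y) := Iff.rfl

lemma le_merge (s : Setoid (Fin m)) (a b : Fin m) : s ≤ merge s a b :=
  Setoid.le_def.2 fun h => Or.inl h

lemma merge_rel (s : Setoid (Fin m)) (a b : Fin m) : (merge s a b).r a b :=
  Or.inr (Or.inl ⟨s.refl a, s.refl b⟩)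

lemma merge_le {s u : Setoid (Fin m)} {a b : Fin m} (hsu : s ≤ u) (hab : u.r a b) :
    merge s a b ≤ u := by
  refine Setoid.le_def.2 ?_
  rintro x y (h | ⟨h1, h2⟩ | ⟨h1, h2⟩)
  · exact Setoid.le_def.1 hsu h
  · exact u.trans (Setoid.le_def.1 hsu h1) (u.trans hab (Setoid.le_def.1 hsu h2))
  · exact u.trans (Setoid.le_def.1 hsu h1) (u.trans (u.symm hab) (Setoid.le_def.1 hsu h2))

lemma merge_comm (s : Setoid (Fin m)) (a b : Fin m) : merge s a b = merge s b a := by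
  apply Setoid.ext; intro x y
  constructor <;> (rintro (h | h | h); exacts [Or.inl h, Or.inr (Or.inr h), Or.inr (Or.inl h)])

lemma merge_congr {s : Setoid (Fin m)} {a b a' b' : Fin m} (ha : s.r a a') (hb : s.r b b') :
    merge s a b = merge s a' b' := by
  apply Setoid.ext; intro x y
  constructor
  · rintro (h | ⟨h1, h2⟩ | ⟨h1, h2⟩)
    · exact Or.inl h
    · exact Or.inr (Or.inl ⟨s.trans h1 ha, s.trans (s.symm hb) h2⟩)
    · exact Or.inr (Or.inr ⟨s.trans h1 hb, s.trans (s.symm ha) h2⟩)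
  · rintro (h | ⟨h1, h2⟩ | ⟨h1, h2⟩)
    · exact Or.inl h
    · exact Or.inr (Or.inl ⟨s.trans h1 (s.symm ha), s.trans hb h2⟩)
    · exact Or.inr (Or.inr ⟨s.trans h1 (s.symm hb), s.trans ha h2⟩)

lemma exists_pair_of_lt {s u : Setoid (Fin m)} (hsu : s ≤ u) (hne : s ≠ u) :
    ∃ p q, u.r p q ∧ ¬ s.r p q := by
  by_contra h
  push_neg at h
  exact hne (Setoid.ext fun p q => ⟨fun hp => Setoid.le_def.1 hsu hp, fun hp => h p q hp⟩)

lemma covBy_merge {s : Setoid (Fin m)} {a b : Fin m} (hab : ¬ s.r a b) :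
    s ⋖ merge s a b := by
  have hlt : s < merge s a b := by
    refine lt_of_le_of_ne (le_merge s a b) fun h => hab ?_
    have := merge_rel s a b
    rw [← h] at this; exact this
  refine ⟨hlt, fun u hsu hut => ?_⟩
  obtain ⟨p, q, hpq, hnpq⟩ := exists_pair_of_lt hsu.le hsu.ne
  have hab' : u.r a b := by
    rcases Setoid.le_def.1 hut.le hpq with h | ⟨h1, h2⟩ | ⟨h1, h2⟩
    · exact absurd h hnpq
    · have e1 : u.r a p := u.symm (Setoid.le_def.1 hsu.le h1)
      have e2 : u.r q b := u.symm (Setoid.le_def.1 hsu.le h2)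
      exact u.trans e1 (u.trans hpq e2)
    · have e1 : u.r b p := u.symm (Setoid.le_def.1 hsu.le h1)
      have e2 : u.r q a := u.symm (Setoid.le_def.1 hsu.le h2)
      exact u.symm (u.trans e1 (u.trans hpq e2))
  exact absurd (merge_le hsu.le hab') (not_le_of_gt hut)


/-- minimum of the block of `x` -/
noncomputable def cmin (s : Setoid (Fin m)) (x : Fin m) : Fin m :=
  (Finset.univ.filter fun y => s.r x y).min'
    ⟨x, Finset.mem_filter.2 ⟨Finset.mem_univ x, s.refl x⟩⟩

lemma cmin_rel (s : Setoid (Fin m)) (x : Fin m) : s.r x (cmin s x) := by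
  have := (Finset.univ.filter fun y => s.r x y).min'_mem
    ⟨x, Finset.mem_filter.2 ⟨Finset.mem_univ x, s.refl x⟩⟩
  exact (Finset.mem_filter.1 this).2

lemma cmin_le (s : Setoid (Fin m)) (x : Fin m) : cmin s x ≤ x :=
  Finset.min'_le _ _ (Finset.mem_filter.2 ⟨Finset.mem_univ x, s.refl x⟩)

lemma cmin_isBlockMin (s : Setoid (Fin m)) (x : Fin m) : IsBlockMin s (cmin s x) := by
  intro y hy
  exact Finset.min'_le _ _
    (Finset.mem_filter.2 ⟨Finset.mem_univ y, s.trans (cmin_rel s x) hy⟩)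

lemma blockMin_mono {s t : Setoid (Fin m)} (hst : s ≤ t) {x : Fin m}
    (h : IsBlockMin t x) : IsBlockMin s x :=
  fun y hy => h y (Setoid.le_def.1 hst hy)

lemma blockMin_unique {s : Setoid (Fin m)} {x y : Fin m} (hx : IsBlockMin s x)
    (hy : IsBlockMin s y) (hxy : s.r x y) : x = y :=
  le_antisymm (hx y hxy) (hy x (s.symm hxy))

noncomputable def minimaF (s : Setoid (Fin m)) : Finset (Fin m) :=
  Finset.univ.filter (IsBlockMin s)

lemma mem_minimaF {s : Setoid (Fin m)} {x : Fin m} : x ∈ minimaF s ↔ IsBlockMin s x := by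
  simp [minimaF]

lemma minimaF_antitone {s t : Setoid (Fin m)} (hst : s ≤ t) : minimaF t ⊆ minimaF s := by
  intro x hx; rw [mem_minimaF] at *; exact blockMin_mono hst hx

lemma isBlockMin_merge {s : Setoid (Fin m)} {a b : Fin m} (hab : ¬ s.r a b)
    (ha : IsBlockMin s a) (hb : IsBlockMin s b) (hlt : a < b) (x : Fin m) :
    IsBlockMin (merge s a b) x ↔ IsBlockMin s x ∧ x ≠ b := by
  constructor
  · intro h
    refine ⟨blockMin_mono (le_merge s a b) h, fun hxb => ?_⟩
    rw [hxb] at h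
    have hba : (merge s a b).r b a := Or.inr (Or.inr ⟨s.refl b, s.refl a⟩)
    exact absurd (h a hba) (not_le_of_gt hlt)
  · rintro ⟨h, hxb⟩ y hy
    rcases hy with hy | ⟨h1, h2⟩ | ⟨h1, h2⟩
    · exact h y hy
    · have hxa : x = a := blockMin_unique h ha h1
      subst hxa
      exact le_trans hlt.le (hb y h2)
    · exact absurd (blockMin_unique h hb h1) hxb

lemma minimaF_merge {s : Setoid (Fin m)} {a b : Fin m} (hab : ¬ s.r a b)
    (ha : IsBlockMin s a) (hb : IsBlockMin s b) (hlt : a < b) :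
    minimaF (merge s a b) = (minimaF s).erase b := by
  ext x
  simp [mem_minimaF, Finset.mem_erase, isBlockMin_merge hab ha hb hlt, and_comm]

lemma label_merge {s : Setoid (Fin m)} {a b : Fin m} (hab : ¬ s.r a b)
    (ha : IsBlockMin s a) (hb : IsBlockMin s b) (hlt : a < b) :
    maxOfMinLabel s (merge s a b) = (b : ℕ) + 1 := by
  have hset : {k : ℕ | ∃ x : Fin m, IsBlockMin s x ∧ ¬ IsBlockMin (merge s a b) x ∧
      k = (x : ℕ) + 1} = {(b : ℕ) + 1} := by
    ext k
    simp only [Set.mem_setOf_eq, Set.mem_singleton_iff]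
    constructor
    · rintro ⟨x, hx1, hx2, rfl⟩
      rw [isBlockMin_merge hab ha hb hlt] at hx2
      push_neg at hx2
      rw [hx2 hx1]
    · rintro rfl
      refine ⟨b, hb, ?_, rfl⟩
      rw [isBlockMin_merge hab ha hb hlt]
      simp
  rw [maxOfMinLabel, hset, csSup_singleton]

/-- every cover is a merge of two blocks (named by their minima). -/
lemma cover_eq_merge {s t : Setoid (Fin m)} (h : s ⋖ t) :
    ∃ a b, ¬ s.r a b ∧ IsBlockMin s a ∧ IsBlockMin s b ∧ a < b ∧ t = merge s a b := by
  obtain ⟨p, q, hpq, hnpq⟩ := exists_pair_of_lt h.lt.le h.lt.ne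
  set a := cmin s p with hadef
  set b := cmin s q with hbdef
  have hap : s.r p a := cmin_rel s p
  have hbq : s.r q b := cmin_rel s q
  have hnab : ¬ s.r a b := fun hc => hnpq (s.trans hap (s.trans hc (s.symm hbq)))
  have hne : a ≠ b := fun hc => hnab (hc ▸ s.refl a)
  have htab : t.r a b := t.trans (t.symm (Setoid.le_def.1 h.lt.le hap))
    (t.trans hpq (Setoid.le_def.1 h.lt.le hbq))
  have hmerge_le : merge s a b ≤ t := merge_le h.lt.le htab
  have hlt' : s < merge s a b := (covBy_merge hnab).lt
  have heq : t = merge s a b := by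
    by_contra hne'
    exact h.2 hlt' (lt_of_le_of_ne hmerge_le (Ne.symm hne'))
  rcases lt_or_gt_of_ne hne with hl | hl
  · exact ⟨a, b, hnab, cmin_isBlockMin s p, cmin_isBlockMin s q, hl, heq⟩
  · refine ⟨b, a, fun hc => hnab (s.symm hc), cmin_isBlockMin s q, cmin_isBlockMin s p, hl, ?_⟩
    rw [heq, merge_comm]


noncomputable def Dset (s Q : Setoid (Fin m)) : Finset (Fin m) := minimaF s \ minimaF Q

lemma mem_Dset {s Q : Setoid (Fin m)} {x : Fin m} :
    x ∈ Dset s Q ↔ IsBlockMin s x ∧ ¬ IsBlockMin Q x := by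
  simp [Dset, mem_minimaF]

lemma cmin_mem_Dset {s Q : Setoid (Fin m)} (hsQ : s ≤ Q) {p w : Fin m}
    (hQpw : Q.r p w) (hwBM : IsBlockMin Q w) (hnpw : ¬ s.r p w) :
    cmin s p ∈ Dset s Q := by
  rw [mem_Dset]
  refine ⟨cmin_isBlockMin s p, fun hBM => ?_⟩
  have hQx : Q.r (cmin s p) w :=
    Q.trans (Q.symm (Setoid.le_def.1 hsQ (cmin_rel s p))) hQpw
  have h1 : cmin s p ≤ w := hBM w hQx
  have h2 : w ≤ cmin s p := hwBM _ (Q.symm hQx)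
  have : cmin s p = w := le_antisymm h1 h2
  exact hnpw (this ▸ cmin_rel s p)

lemma Dset_nonempty {s Q : Setoid (Fin m)} (hsQ : s ≤ Q) (hne : s ≠ Q) :
    (Dset s Q).Nonempty := by
  obtain ⟨p, q, hpq, hnpq⟩ := exists_pair_of_lt hsQ hne
  set w := cmin Q p with hw
  have hQpw : Q.r p w := cmin_rel Q p
  have hwBM : IsBlockMin Q w := cmin_isBlockMin Q p
  by_cases hpw : s.r p w
  · have hqw : ¬ s.r q w := fun hc => hnpq (s.trans hpw (s.symm hc))
    exact ⟨cmin s q, cmin_mem_Dset hsQ (Q.trans (Q.symm hpq) hQpw) hwBM hqw⟩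
  · exact ⟨cmin s p, cmin_mem_Dset hsQ hQpw hwBM hpw⟩

/-- The key step lemma: from `s < Q` there is a unique cover step towards `Q`
with minimal possible label, and it removes exactly the minimal element of
`Dset s Q` from the block minima. -/
lemma step {s Q : Setoid (Fin m)} (hsQ : s ≤ Q) (hne : (Dset s Q).Nonempty) :
    ∃ t, s ⋖ t ∧ t ≤ Q ∧
      maxOfMinLabel s t = (((Dset s Q).min' hne : Fin m) : ℕ) + 1 ∧
      minimaF t = (minimaF s).erase ((Dset s Q).min' hne) ∧
      ∀ t', s ⋖ t' → t' ≤ Q →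
        maxOfMinLabel s t' ≤ (((Dset s Q).min' hne : Fin m) : ℕ) + 1 → t' = t := by
  set x := (Dset s Q).min' hne with hxdef
  have hxmem := (Dset s Q).min'_mem hne
  rw [mem_Dset] at hxmem
  obtain ⟨hBMsx, hnBMQx⟩ := hxmem
  set y := cmin Q x with hy
  have hyBMQ : IsBlockMin Q y := cmin_isBlockMin Q x
  have hyBMs : IsBlockMin s y := blockMin_mono hsQ hyBMQ
  have hQxy : Q.r x y := cmin_rel Q x
  have hyx : y < x := by
    refine lt_of_le_of_ne (cmin_le Q x) fun hc => hnBMQx ?_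
    show IsBlockMin Q x
    exact hc ▸ hyBMQ
  have hnyx : ¬ s.r y x := fun hc =>
    absurd (hBMsx y (s.symm hc)) (not_le_of_gt hyx)
  refine ⟨merge s y x, covBy_merge hnyx, merge_le hsQ (Q.symm hQxy),
    label_merge hnyx hyBMs hBMsx hyx, minimaF_merge hnyx hyBMs hBMsx hyx, ?_⟩
  intro t' hcov hle hlab
  obtain ⟨a, b, hnab, haBM, hbBM, hab, rfl⟩ := cover_eq_merge hcov
  rw [label_merge hnab haBM hbBM hab] at hlab
  have hQab : Q.r a b := Setoid.le_def.1 hle (merge_rel s a b)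
  have hbD : b ∈ Dset s Q := by
    rw [mem_Dset]
    exact ⟨hbBM, fun hc => absurd (hc a (Q.symm hQab)) (not_le_of_gt hab)⟩
  have hxb : x ≤ b := Finset.min'_le _ _ hbD
  have hbx : b = x := le_antisymm (by exact_mod_cast Nat.succ_le_succ_iff.1 hlab) hxb
  have hQya : Q.r y a := Q.trans (Q.symm hQxy) (Q.trans (hbx ▸ Q.symm hQab) (Q.refl a))
  have hya : y ≤ a := hyBMQ a hQya
  have hay : a = y := by
    by_contra hc
    have hlt : y < a := lt_of_le_of_ne hya (Ne.symm hc)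
    have haD : a ∈ Dset s Q := by
      rw [mem_Dset]
      exact ⟨haBM, fun hc' => absurd (hc' y (Q.symm hQya)) (not_le_of_gt hlt)⟩
    exact absurd (hbx ▸ hab : a < x) (not_lt_of_ge (Finset.min'_le _ _ haD))
  rw [hay, hbx]


def Conds (Q s : Setoid (Fin m)) (l : List (Setoid (Fin m))) : Prop :=
  l.Chain' (· ⋖ ·) ∧ l.head? = some s ∧ l.getLast? = some Q ∧
    (l.zip l.tail).Chain' fun p q => maxOfMinLabel p.1 p.2 ≤ maxOfMinLabel q.1 q.2

lemma chain_le : ∀ (l : List (Setoid (Fin m))) (u v : Setoid (Fin m)),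
    l.Chain' (· ⋖ ·) → l.head? = some u → l.getLast? = some v → u ≤ v := by
  intro l
  induction l with
  | nil => intro u v _ hh _; simp at hh
  | cons a l ih =>
    intro u v hc hh hl
    have hau : a = u := by simpa using hh
    subst hau
    cases l with
    | nil => simp at hl; subst hl; exact le_rfl
    | cons b l' =>
      rw [List.getLast?_cons_cons] at hl
      exact le_trans (List.isChain_cons_cons.1 hc).1.le
        (ih b v (List.isChain_cons_cons.1 hc).2 rfl hl)

lemma label_eq_of_removed {s t : Setoid (Fin m)} (h : s ⋖ t) {x : Fin m}
    (h1 : IsBlockMin s x) (h2 : ¬ IsBlockMin t x) :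
    maxOfMinLabel s t = (x : ℕ) + 1 := by
  obtain ⟨a, b, hnab, ha, hb, hab, rfl⟩ := cover_eq_merge h
  have hxb : x = b := by
    rw [isBlockMin_merge hnab ha hb hab] at h2
    push_neg at h2
    exact h2 h1
  subst hxb
  exact label_merge hnab ha hb hab

lemma first_label_le : ∀ (l : List (Setoid (Fin m))) (s Q : Setoid (Fin m)) (x : Fin m),
    l.Chain' (· ⋖ ·) → l.head? = some s → l.getLast? = some Q →
    (l.zip l.tail).Chain' (fun p q => maxOfMinLabel p.1 p.2 ≤ maxOfMinLabel q.1 q.2) →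
    IsBlockMin s x → ¬ IsBlockMin Q x →
    ∀ u v, (l.zip l.tail).head? = some (u, v) → maxOfMinLabel u v ≤ (x : ℕ) + 1 := by
  intro l
  induction l with
  | nil => intro s Q x _ _ _ _ _ _ u v hz; simp at hz
  | cons a l ih =>
    intro s Q x hc hh hl hinc hBMs hBMQ u v hz
    have has : a = s := by simpa using hh
    subst has
    cases l with
    | nil => simp at hz
    | cons b l' =>
      have huv : u = a ∧ v = b := by
        simp only [List.tail_cons, List.zip_cons_cons, List.head?_cons,
          Option.some.injEq, Prod.mk.injEq] at hz
        exact ⟨hz.1.symm, hz.2.symm⟩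
      obtain ⟨h1, h2⟩ := huv
      subst h1; subst h2
      have hab : u ⋖ v := (List.isChain_cons_cons.1 hc).1
      by_cases hBMt : IsBlockMin v x
      · cases l' with
        | nil =>
          rw [List.getLast?_cons_cons] at hl
          simp at hl
          exact absurd (hl ▸ hBMt) hBMQ
        | cons c r =>
          rw [List.getLast?_cons_cons] at hl
          have htail : ((v :: c :: r).zip (c :: r)).Chain'
              (fun p q => maxOfMinLabel p.1 p.2 ≤ maxOfMinLabel q.1 q.2) := by
            have := hinc
            simp only [List.tail_cons, List.zip_cons_cons] at this
            exact (List.isChain_cons.1 this).2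
          have h2 := ih v Q x (List.isChain_cons_cons.1 hc).2 rfl hl
            (by simpa using htail) hBMt hBMQ v c (by simp)
          have h1 : maxOfMinLabel u v ≤ maxOfMinLabel v c := by
            have := hinc
            simp only [List.tail_cons, List.zip_cons_cons] at this
            exact (List.isChain_cons_cons.1 this).1
          exact le_trans h1 h2
      · exact le_of_eq (label_eq_of_removed hab hBMs hBMt)

lemma Dset_erase {s t Q : Setoid (Fin m)} {x : Fin m}
    (h : minimaF t = (minimaF s).erase x) : Dset t Q = (Dset s Q).erase x := by
  ext z
  simp only [Dset, Finset.mem_sdiff, h, Finset.mem_erase]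
  tauto

lemma conds_singleton {Q : Setoid (Fin m)} (_hQ : Q ≤ Q) : Conds Q Q [Q] := by
  refine ⟨List.isChain_singleton Q, rfl, rfl, by simp [List.Chain']⟩

lemma exists_chain : ∀ (k : ℕ) (s Q : Setoid (Fin m)), s ≤ Q → (minimaF s).card ≤ k →
    ∃ l, Conds Q s l ∧
      ∀ u v, (l.zip l.tail).head? = some (u, v) →
        ∃ z ∈ Dset s Q, maxOfMinLabel u v = (z : ℕ) + 1 := by
  intro k
  induction k with
  | zero =>
    intro s Q hsQ hcard
    have hsq : s = Q := by
      by_contra hne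
      obtain ⟨z, hz⟩ := Dset_nonempty hsQ hne
      have hz' : z ∈ minimaF s := (Finset.mem_sdiff.1 hz).1
      have := Finset.card_pos.2 ⟨z, hz'⟩
      omega
    subst hsq
    exact ⟨[s], conds_singleton hsQ, by simp⟩
  | succ k ih =>
    intro s Q hsQ hcard
    by_cases hsq : s = Q
    · subst hsq
      exact ⟨[s], conds_singleton hsQ, by simp⟩
    · have hne := Dset_nonempty hsQ hsq
      obtain ⟨t, hcov, htQ, hlab, hmin, _⟩ := step hsQ hne
      have hxmem := (Dset s Q).min'_mem hne
      have hxs : (Dset s Q).min' hne ∈ minimaF s := (Finset.mem_sdiff.1 hxmem).1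
      have hcard' : (minimaF t).card ≤ k := by
        rw [hmin, Finset.card_erase_of_mem hxs]
        have := Finset.card_pos.2 ⟨_, hxs⟩
        omega
      obtain ⟨l', ⟨hc', hh', hl', hinc'⟩, hfirst'⟩ := ih t Q htQ hcard'
      cases l' with
      | nil => simp at hh'
      | cons t0 r =>
        have ht0 : t0 = t := by simpa using hh'
        subst ht0
        refine ⟨s :: t0 :: r, ⟨List.isChain_cons_cons.2 ⟨hcov, hc'⟩, rfl,
          by rw [List.getLast?_cons_cons]; exact hl', ?_⟩, ?_⟩
        · simp only [List.tail_cons, List.zip_cons_cons]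
          refine List.isChain_cons.2 ⟨?_, by simpa [List.Chain'] using hinc'⟩
          rintro ⟨u, v⟩ hmem
          obtain ⟨z, hzmem, hzlab⟩ := hfirst' u v (by simpa using hmem)
          rw [Dset_erase hmin, Finset.mem_erase] at hzmem
          have hxz : (Dset s Q).min' hne ≤ z := Finset.min'_le _ _ hzmem.2
          simp only []
          rw [hlab, hzlab]
          exact Nat.succ_le_succ hxz
        · intro u v hz
          simp only [List.tail_cons, List.zip_cons_cons, List.head?_cons,
            Option.some.injEq, Prod.mk.injEq] at hz
          obtain ⟨h1, h2⟩ := hz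
          subst h1; subst h2
          exact ⟨_, hxmem, hlab⟩

lemma conds_of_eq {Q : Setoid (Fin m)} {l : List (Setoid (Fin m))}
    (h : Conds Q Q l) : l = [Q] := by
  obtain ⟨hc, hh, hl, _⟩ := h
  cases l with
  | nil => simp at hh
  | cons a r =>
    have haQ : a = Q := by simpa using hh
    subst haQ
    cases r with
    | nil => rfl
    | cons b r' =>
      have hab : a ⋖ b := (List.isChain_cons_cons.1 hc).1
      rw [List.getLast?_cons_cons] at hl
      have hbQ : b ≤ a := chain_le (b :: r') b a (List.isChain_cons_cons.1 hc).2 rfl hl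
      exact absurd hbQ (not_le_of_gt hab.lt)

lemma chain_unique : ∀ (k : ℕ) (s Q : Setoid (Fin m)), s ≤ Q → (minimaF s).card ≤ k →
    ∀ l₁ l₂, Conds Q s l₁ → Conds Q s l₂ → l₁ = l₂ := by
  intro k
  induction k with
  | zero =>
    intro s Q hsQ hcard l₁ l₂ h₁ h₂
    have hsq : s = Q := by
      by_contra hne
      obtain ⟨z, hz⟩ := Dset_nonempty hsQ hne
      have hz' : z ∈ minimaF s := (Finset.mem_sdiff.1 hz).1
      have := Finset.card_pos.2 ⟨z, hz'⟩
      omega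
    subst hsq
    rw [conds_of_eq h₁, conds_of_eq h₂]
  | succ k ih =>
    intro s Q hsQ hcard l₁ l₂ h₁ h₂
    by_cases hsq : s = Q
    · subst hsq
      rw [conds_of_eq h₁, conds_of_eq h₂]
    · have hne := Dset_nonempty hsQ hsq
      obtain ⟨t, hcov, htQ, hlab, hmin, huniq⟩ := step hsQ hne
      have hxmem := (Dset s Q).min'_mem hne
      have hxmem' := hxmem
      rw [mem_Dset] at hxmem'
      have hxs : (Dset s Q).min' hne ∈ minimaF s := (Finset.mem_sdiff.1 hxmem).1
      have hcard' : (minimaF t).card ≤ k := by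
        rw [hmin, Finset.card_erase_of_mem hxs]
        have := Finset.card_pos.2 ⟨_, hxs⟩
        omega
      have key : ∀ l, Conds Q s l → ∃ r, l = s :: t :: r ∧ Conds Q t (t :: r) := by
        rintro l ⟨hc, hh, hl, hinc⟩
        cases l with
        | nil => simp at hh
        | cons a r =>
          have has : a = s := by simpa using hh
          subst has
          cases r with
          | nil =>
            simp at hl
            exact absurd hl hsq
          | cons b r' =>
            have hab : a ⋖ b := (List.isChain_cons_cons.1 hc).1
            rw [List.getLast?_cons_cons] at hl
            have hbQ : b ≤ Q := chain_le (b :: r') b Q (List.isChain_cons_cons.1 hc).2 rfl hl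
            have hlabel : maxOfMinLabel a b ≤ (((Dset a Q).min' hne : Fin m) : ℕ) + 1 :=
              first_label_le (a :: b :: r') a Q _ hc rfl
                (by rw [List.getLast?_cons_cons]; exact hl) hinc hxmem'.1 hxmem'.2 a b
                (by simp)
            have hbt : b = t := huniq b hab hbQ hlabel
            subst hbt
            refine ⟨r', rfl, (List.isChain_cons_cons.1 hc).2, rfl, hl, ?_⟩
            have := hinc
            simp only [List.tail_cons, List.zip_cons_cons] at this
            simpa [List.Chain'] using (List.isChain_cons.1 this).2
      obtain ⟨r₁, hr₁, hcond₁⟩ := key l₁ h₁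
      obtain ⟨r₂, hr₂, hcond₂⟩ := key l₂ h₂
      have := ih t Q htQ hcard' (t :: r₁) (t :: r₂) hcond₁ hcond₂
      rw [hr₁, hr₂]
      simpa using this

end Stmt11

/-- The max-of-min edge labeling of the set partition lattice `Πₙ` of
`{1,…,n+1}` is an R-labeling: every interval `[P, Q]` contains a unique
maximal (saturated) chain along which the edge labels weakly increase. -/
theorem stmt11 (n : ℕ) (P Q : Setoid (Fin (n + 1))) (hPQ : P ≤ Q) :
    ∃! l : List (Setoid (Fin (n + 1))),
      l.Chain' (· ⋖ ·) ∧ l.head? = some P ∧ l.getLast? = some Q ∧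
        (l.zip l.tail).Chain' fun p q =>
          maxOfMinLabel p.1 p.2 ≤ maxOfMinLabel q.1 q.2 := by
  obtain ⟨l, hconds, -⟩ :=
    Stmt11.exists_chain (Stmt11.minimaF P).card P Q hPQ le_rfl
  exact ⟨l, hconds, fun l' hl' =>
    Stmt11.chain_unique (Stmt11.minimaF P).card P Q hPQ le_rfl l' l hl' hconds⟩
end

section
/- For the Boolean lattice Bₙ of subsets of {1,...,n}, the Chow polynomial H̲_{Bₙ}(x) (as defined via chains and reduced characteristic polynomials) equals the nth Eulerian polynomial Aₙ(x) = Σ_{w ∈ Sₙ} x^{des(w)}. -/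
open scoped Classical

set_option linter.unusedSectionVars false

open scoped Classical
open Finset

namespace Stmt14Aux

variable {n : ℕ}

/-- key: order elements by block `g x` ascending, ties broken by `x` descending -/
def kap (n : ℕ) (g : Fin n → ℕ) (x : Fin n) : ℕ := g x * n + (n - 1 - x.1)

lemma kap_lt_of_lt {g : Fin n → ℕ} {x y : Fin n} (h : g x < g y) :
    kap n g x < kap n g y := by
  have hx := x.isLt
  calc kap n g x < g x * n + n := by unfold kap; omega
  _ = (g x + 1) * n := by ring
  _ ≤ g y * n := Nat.mul_le_mul_right n h
  _ ≤ kap n g y := Nat.le_add_right _ _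

lemma kap_lt_of_eq {g : Fin n → ℕ} {x y : Fin n} (h : g x = g y) (hxy : y < x) :
    kap n g x < kap n g y := by
  have hx := x.isLt; have hy := y.isLt
  have hxy' : (y : ℕ) < x := hxy
  unfold kap
  rw [h]
  apply Nat.add_lt_add_left
  omega

lemma kap_inj (g : Fin n → ℕ) : Function.Injective (kap n g) := by
  intro x y h
  rcases lt_trichotomy (g x) (g y) with hg | hg | hg
  · exact absurd h (Nat.ne_of_lt (kap_lt_of_lt hg))
  · have hx := x.isLt; have hy := y.isLt
    unfold kap at h
    rw [hg] at h
    have h2 := Nat.add_left_cancel h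
    exact Fin.ext (by omega)
  · exact absurd h.symm (Nat.ne_of_lt (kap_lt_of_lt hg))

lemma of_kap_lt {g : Fin n → ℕ} {x y : Fin n} (h : kap n g x < kap n g y) :
    g x < g y ∨ (g x = g y ∧ y < x) := by
  rcases lt_trichotomy (g x) (g y) with hg | hg | hg
  · exact Or.inl hg
  · rcases lt_trichotomy x y with hxy | hxy | hxy
    · exact absurd (kap_lt_of_eq hg.symm hxy) (by omega)
    · subst hxy; omega
    · exact Or.inr ⟨hg, hxy⟩
  · exact absurd (kap_lt_of_lt hg) (by omega)

lemma card_kap_image (g : Fin n → ℕ) : (univ.image (kap n g)).card = n := by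
  rw [card_image_of_injective _ (kap_inj g), card_univ, Fintype.card_fin]

noncomputable def kapEquiv (g : Fin n → ℕ) :
    Fin n ≃ {y // y ∈ univ.image (kap n g)} :=
  Equiv.ofBijective
    (fun x : Fin n => ⟨kap n g x, mem_image_of_mem _ (mem_univ x)⟩)
    ((Fintype.bijective_iff_injective_and_card _).2
      ⟨fun a b h => kap_inj g (congrArg Subtype.val h),
       by simp [Fintype.card_coe, card_kap_image]⟩)

noncomputable def blockPerm (g : Fin n → ℕ) : Equiv.Perm (Fin n) :=
  ((univ.image (kap n g)).orderIsoOfFin (card_kap_image g)).toEquiv.trans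
    (kapEquiv g).symm

lemma kap_blockPerm (g : Fin n → ℕ) (p : Fin n) :
    kap n g (blockPerm g p) =
      (univ.image (kap n g)).orderEmbOfFin (card_kap_image g) p := by
  have h2 := congrArg Subtype.val
    ((kapEquiv g).apply_symm_apply
      (((univ.image (kap n g)).orderIsoOfFin (card_kap_image g)) p))
  rw [← Finset.coe_orderIsoOfFin_apply]
  exact h2

lemma blockPerm_kap_strictMono (g : Fin n → ℕ) :
    StrictMono fun p => kap n g (blockPerm g p) := by
  have h := ((univ.image (kap n g)).orderEmbOfFin (card_kap_image g)).strictMono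
  intro p p' hp
  show kap n g (blockPerm g p) < kap n g (blockPerm g p')
  rw [kap_blockPerm, kap_blockPerm]
  exact h hp

lemma blockPerm_unique {g : Fin n → ℕ} {w : Equiv.Perm (Fin n)}
    (hw : StrictMono fun p => kap n g (w p)) : w = blockPerm g := by
  have huniq := Finset.orderEmbOfFin_unique (card_kap_image g)
    (f := fun p => kap n g (w p)) (fun i => mem_image_of_mem _ (mem_univ _)) hw
  apply Equiv.ext
  intro p
  refine kap_inj g ?_
  rw [kap_blockPerm]
  exact congrFun huniq p
def posSet (n : ℕ) : Finset (Fin n) := univ.filter (fun i => (i : ℕ) + 1 < n)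

lemma mem_posSet {i : Fin n} : i ∈ posSet n ↔ (i : ℕ) + 1 < n := by
  simp [posSet]

lemma card_posSet (hn : 0 < n) : (posSet n).card = n - 1 := by
  have : posSet n = univ.erase ⟨n - 1, by omega⟩ := by
    ext i
    have := i.isLt
    simp only [mem_posSet, mem_erase, mem_univ, and_true]
    constructor
    · intro h heq
      rw [heq] at h; simp at h; omega
    · intro h
      have : (i : ℕ) ≠ n - 1 := fun hc => h (Fin.ext hc)
      omega
  rw [this, card_erase_of_mem (mem_univ _), card_univ, Fintype.card_fin]

def bIdx (B : Finset (Fin n)) (p : Fin n) : ℕ := (B.filter (fun b => b < p)).card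

lemma bIdx_zero (B : Finset (Fin n)) (hn : 0 < n) : bIdx B ⟨0, hn⟩ = 0 := by
  unfold bIdx
  rw [Finset.card_eq_zero, Finset.filter_eq_empty_iff]
  intro b _
  simp [Fin.lt_def]

lemma bIdx_succ (B : Finset (Fin n)) (p : Fin n) (h : (p : ℕ) + 1 < n) :
    bIdx B ⟨(p : ℕ) + 1, h⟩ = bIdx B p + if p ∈ B then 1 else 0 := by
  unfold bIdx
  have h1 : B.filter (fun b => b < ⟨(p : ℕ) + 1, h⟩) =
      B.filter (fun b => b < p ∨ b = p) := by
    apply filter_congr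
    intro b _
    simp only [Fin.lt_def, eq_iff_iff]
    constructor
    · intro hb
      rcases Nat.lt_or_ge (b : ℕ) (p : ℕ) with h2 | h2
      · exact Or.inl h2
      · exact Or.inr (Fin.ext (by omega))
    · rintro (hb | rfl)
      · omega
      · omega
  rw [h1, filter_or, card_union_of_disjoint, Finset.filter_eq']
  · split <;> simp
  · rw [Finset.disjoint_filter]
    rintro x _ hx rfl
    exact absurd hx (lt_irrefl _)

lemma bIdx_le_card (B : Finset (Fin n)) (p : Fin n) : bIdx B p ≤ B.card :=
  card_le_card (filter_subset _ _)

lemma bIdx_mono (B : Finset (Fin n)) {p p' : Fin n} (h : p ≤ p') :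
    bIdx B p ≤ bIdx B p' := by
  apply card_le_card
  intro b hb
  rw [mem_filter] at hb ⊢
  exact ⟨hb.1, lt_of_lt_of_le hb.2 h⟩

lemma bIdx_last (hn : 0 < n) {B : Finset (Fin n)} (hB : B ⊆ posSet n) :
    bIdx B ⟨n - 1, by omega⟩ = B.card := by
  unfold bIdx
  congr 1
  apply Finset.filter_true_of_mem
  intro b hb
  have := mem_posSet.1 (hB hb)
  simp only [Fin.lt_def]
  omega

lemma bIdx_attain (hn : 0 < n) {B : Finset (Fin n)} (hB : B ⊆ posSet n)
    {j : ℕ} (hj : j ≤ B.card) : ∃ p, bIdx B p = j := by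
  rcases Nat.eq_zero_or_pos j with rfl | hj0
  · exact ⟨⟨0, hn⟩, bIdx_zero B hn⟩
  · set T := univ.filter (fun r : Fin n => j ≤ bIdx B r) with hT
    have hTne : T.Nonempty := ⟨⟨n - 1, by omega⟩, by
      simp only [hT, mem_filter, mem_univ, true_and]
      rw [bIdx_last hn hB]; exact hj⟩
    set p' := T.min' hTne with hp'
    have hmem : j ≤ bIdx B p' := (mem_filter.1 (T.min'_mem hTne)).2
    have hp'0 : (p' : ℕ) ≠ 0 := by
      intro hc
      have : p' = ⟨0, hn⟩ := Fin.ext hc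
      rw [this, bIdx_zero B hn] at hmem; omega
    have hlt : (p' : ℕ) - 1 + 1 < n := by have := p'.isLt; omega
    set q : Fin n := ⟨(p' : ℕ) - 1, by omega⟩ with hq
    have hqT : q ∉ T := by
      intro hqT
      have := T.min'_le q hqT
      rw [← hp'] at this
      have : (p' : ℕ) ≤ (q : ℕ) := this
      simp only [hq] at this
      omega
    have hqlt : bIdx B q < j := by
      by_contra hc
      exact hqT (mem_filter.2 ⟨mem_univ _, by omega⟩)
    have hstep := bIdx_succ B q hlt
    have hqp : (⟨(q : ℕ) + 1, hlt⟩ : Fin n) = p' := Fin.ext (by simp [hq]; omega)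
    rw [hqp] at hstep
    refine ⟨p', ?_⟩
    split at hstep <;> omega

/-! ### helpers -/

lemma fin_strictMono_of_consec {α : Type*} [Preorder α] {f : Fin n → α}
    (hf : ∀ (m : ℕ) (h : m + 1 < n), f ⟨m, by omega⟩ < f ⟨m + 1, h⟩) :
    StrictMono f := by
  have key : ∀ (b a : ℕ) (ha : a < n) (hb : b < n), a < b → f ⟨a, ha⟩ < f ⟨b, hb⟩ := by
    intro b
    induction b with
    | zero => intro a ha hb h; omega
    | succ m ih =>
      intro a ha hb h
      rcases Nat.lt_or_ge a m with h2 | h2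
      · exact lt_trans (ih a ha (by omega) h2) (hf m hb)
      · have : a = m := by omega
        subst this
        exact hf a hb
  intro p p' h
  have := key p'.1 p.1 p.isLt p'.isLt h
  simpa using this

lemma sigma_eq_helper {α : Type*} {k k' : ℕ} {c : Fin (k + 1) → α} {c' : Fin (k' + 1) → α}
    (hk : k' = k) (h : ∀ j : Fin (k + 1), c' (Fin.cast (by rw [hk]) j) = c j) :
    (⟨k', c'⟩ : Σ m : ℕ, (Fin (m + 1) → α)) = ⟨k, c⟩ := by
  subst hk
  have : c' = c := by
    funext j
    have := h j
    simpa using this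
  rw [this]

/-! ### chain block function -/

def chainBlock (k : ℕ) (c : Fin (k + 1) → Finset (Fin n)) (x : Fin n) : ℕ :=
  ((insert (Fin.last k) (univ.filter (fun j => x ∈ c j))).min' (insert_nonempty _ _)).1 - 1

section ChainSide

variable {k : ℕ} {c : Fin (k + 1) → Finset (Fin n)}
  (hc : StrictMono c) (h0 : c 0 = ⊥) (h1 : c (Fin.last k) = ⊤)

include hc h0 h1

lemma chainBlock_lt_iff (x : Fin n) (j : Fin (k + 1)) :
    chainBlock k c x < (j : ℕ) ↔ x ∈ c j := by
  classical
  set T := univ.filter (fun j => x ∈ c j) with hT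
  have hlast : Fin.last k ∈ T := by
    simp only [hT, mem_filter, mem_univ, true_and, h1]
    exact mem_univ x
  have hins : insert (Fin.last k) T = T := insert_eq_self.2 hlast
  set m := (insert (Fin.last k) T).min' (insert_nonempty _ _) with hm
  have hm_mem : m ∈ T := by rw [← hins]; exact min'_mem _ _
  have hm_le : ∀ j ∈ T, m ≤ j := fun j hj => min'_le _ _ (mem_insert_of_mem hj)
  have hxm : x ∈ c m := (mem_filter.1 hm_mem).2
  have hm0 : (m : ℕ) ≠ 0 := by
    intro hc0
    have : m = 0 := Fin.ext hc0
    rw [this, h0] at hxm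
    exact absurd hxm (by simp)
  have hcb : chainBlock k c x = (m : ℕ) - 1 := rfl
  constructor
  · intro h
    rw [hcb] at h
    have : m ≤ j := by rw [Fin.le_def]; omega
    exact hc.monotone this hxm
  · intro h
    have : m ≤ j := hm_le j (by simp [hT, h])
    rw [Fin.le_def] at this
    rw [hcb]
    omega

lemma chainBlock_lt (x : Fin n) : chainBlock k c x < k := by
  have := (chainBlock_lt_iff hc h0 h1 x (Fin.last k)).2 (by rw [h1]; exact mem_univ x)
  simpa using this

lemma chainBlock_surj {j : ℕ} (hj : j < k) : ∃ x, chainBlock k c x = j := by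
  have hlt : (⟨j, by omega⟩ : Fin (k + 1)) < ⟨j + 1, by omega⟩ :=
    Fin.mk_lt_mk.mpr (Nat.lt_succ_self j)
  have hss : c ⟨j, by omega⟩ ⊂ c ⟨j + 1, by omega⟩ := hc hlt
  obtain ⟨x, hx2, hx1⟩ := exists_of_ssubset hss
  refine ⟨x, ?_⟩
  have ha : chainBlock k c x < j + 1 :=
    (chainBlock_lt_iff hc h0 h1 x ⟨j + 1, by omega⟩).2 hx2
  have hb : ¬ chainBlock k c x < j :=
    fun hl => hx1 ((chainBlock_lt_iff hc h0 h1 x ⟨j, by omega⟩).1 hl)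
  omega

end ChainSide

lemma chainBlock_eq_of {k : ℕ} {c : Fin (k + 1) → Finset (Fin n)} {x : Fin n} {m : ℕ}
    (hmk : m < k) (h : ∀ j : Fin (k + 1), x ∈ c j ↔ m < (j : ℕ)) :
    chainBlock k c x = m := by
  classical
  set T := univ.filter (fun j => x ∈ c j) with hT
  have hTeq : ∀ j : Fin (k + 1), j ∈ T ↔ m < (j : ℕ) := by
    intro j; simp [hT, h j]
  have hmm : (⟨m + 1, by omega⟩ : Fin (k + 1)) ∈ insert (Fin.last k) T :=
    mem_insert_of_mem ((hTeq _).2 (by simp))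
  have hmin : (insert (Fin.last k) T).min' (insert_nonempty _ _) = ⟨m + 1, by omega⟩ := by
    apply le_antisymm (min'_le _ _ hmm)
    apply le_min'
    intro y hy
    rcases mem_insert.1 hy with rfl | hy
    · rw [Fin.le_def]; simp [Fin.last]; omega
    · have := (hTeq y).1 hy
      rw [Fin.le_def]; simp; omega
  show ((insert (Fin.last k) T).min' (insert_nonempty _ _) : ℕ) - 1 = m
  rw [hmin]
  rfl



/-! ### the maps -/

def desSet (w : Equiv.Perm (Fin n)) : Finset (Fin n) :=
  univ.filter (fun i => ∃ h : (i : ℕ) + 1 < n, w ⟨(i : ℕ) + 1, h⟩ < w i)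

lemma desSet_subset_posSet (w : Equiv.Perm (Fin n)) : desSet w ⊆ posSet n := by
  intro p hp
  rw [desSet, mem_filter] at hp
  obtain ⟨h, _⟩ := hp.2
  exact mem_posSet.2 h

noncomputable def phiS (k : ℕ) (c : Fin (k + 1) → Finset (Fin n)) : Finset (Fin n) :=
  univ.filter (fun p => ∃ h : (p : ℕ) + 1 < n,
    chainBlock k c (blockPerm (chainBlock k c) ⟨(p : ℕ) + 1, h⟩) =
      chainBlock k c (blockPerm (chainBlock k c) p))

lemma mem_phiS {k : ℕ} {c : Fin (k + 1) → Finset (Fin n)} {p : Fin n} :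
    p ∈ phiS k c ↔ ∃ h : (p : ℕ) + 1 < n,
      chainBlock k c (blockPerm (chainBlock k c) ⟨(p : ℕ) + 1, h⟩) =
        chainBlock k c (blockPerm (chainBlock k c) p) := by
  simp [phiS]

noncomputable def phi (k : ℕ) (c : Fin (k + 1) → Finset (Fin n)) :
    Σ _ : Equiv.Perm (Fin n), Finset (Fin n) :=
  ⟨blockPerm (chainBlock k c), phiS k c⟩

noncomputable def psi (w : Equiv.Perm (Fin n)) (S : Finset (Fin n)) :
    Σ k : ℕ, (Fin (k + 1) → Finset (Fin n)) :=
  ⟨n - S.card, fun j => univ.filter (fun x => bIdx (posSet n \ S) (w⁻¹ x) < (j : ℕ))⟩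

/-! ### general blockPerm order facts -/

lemma g_le_of_kap_le {g : Fin n → ℕ} {x y : Fin n} (h : kap n g x ≤ kap n g y) :
    g x ≤ g y := by
  by_contra hc
  exact absurd (kap_lt_of_lt (by omega : g y < g x)) (by omega)

lemma blockPerm_g_mono (g : Fin n → ℕ) {p p' : Fin n} (h : p ≤ p') :
    g (blockPerm g p) ≤ g (blockPerm g p') := by
  rcases eq_or_lt_of_le h with rfl | h
  · exact le_refl _
  · exact g_le_of_kap_le (le_of_lt (blockPerm_kap_strictMono g h))

lemma blockPerm_consec (g : Fin n → ℕ) {m : ℕ} (hm : m < n) (h1 : m + 1 < n) :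
    g (blockPerm g ⟨m, hm⟩) < g (blockPerm g ⟨m + 1, h1⟩) ∨
      (g (blockPerm g ⟨m, hm⟩) = g (blockPerm g ⟨m + 1, h1⟩) ∧
        blockPerm g ⟨m + 1, h1⟩ < blockPerm g ⟨m, hm⟩) :=
  of_kap_lt (blockPerm_kap_strictMono g (Fin.mk_lt_mk.2 (by omega)))

/-! ### chain-side facts -/

section ChainFacts

variable (hn : 0 < n) {k : ℕ} {c : Fin (k + 1) → Finset (Fin n)}
  (hc : StrictMono c) (h0 : c 0 = ⊥) (h1 : c (Fin.last k) = ⊤)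

include hn hc h0 h1

lemma chain_k_pos : 0 < k := by
  rcases Nat.eq_zero_or_pos k with rfl | h
  · have hbt : (⊥ : Finset (Fin n)) = ⊤ := by
      rw [← h0, ← h1]; rfl
    have := mem_univ (⟨0, hn⟩ : Fin n)
    rw [← Finset.top_eq_univ, ← hbt, Finset.bot_eq_empty] at this
    exact absurd this (notMem_empty _)
  · exact h

lemma chain_gw_zero :
    chainBlock k c (blockPerm (chainBlock k c) ⟨0, hn⟩) = 0 := by
  obtain ⟨x, hx⟩ := chainBlock_surj hc h0 h1 (chain_k_pos hn hc h0 h1)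
  set w := blockPerm (chainBlock k c)
  have hr : w (w⁻¹ x) = x := Equiv.apply_symm_apply w x
  have hle : chainBlock k c (w ⟨0, hn⟩) ≤ chainBlock k c (w (w⁻¹ x)) :=
    blockPerm_g_mono _ (by rw [Fin.le_def]; exact Nat.zero_le _)
  rw [hr, hx] at hle
  omega

lemma chain_gw_last (hn1 : n - 1 < n) :
    chainBlock k c (blockPerm (chainBlock k c) ⟨n - 1, hn1⟩) = k - 1 := by
  have hk := chain_k_pos hn hc h0 h1
  obtain ⟨x, hx⟩ := chainBlock_surj hc h0 h1 (Nat.sub_lt hk Nat.one_pos)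
  set w := blockPerm (chainBlock k c)
  have hr : w (w⁻¹ x) = x := Equiv.apply_symm_apply w x
  have hle : chainBlock k c (w (w⁻¹ x)) ≤ chainBlock k c (w ⟨n - 1, hn1⟩) :=
    blockPerm_g_mono _ (by rw [Fin.le_def]; exact Nat.le_sub_one_of_lt (w⁻¹ x).isLt)
  have hlt := chainBlock_lt hc h0 h1 (w ⟨n - 1, hn1⟩)
  rw [hr, hx] at hle
  omega

lemma chain_gw_step {m : ℕ} (hm : m < n) (h : m + 1 < n) :
    chainBlock k c (blockPerm (chainBlock k c) ⟨m + 1, h⟩) =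
        chainBlock k c (blockPerm (chainBlock k c) ⟨m, hm⟩) ∨
      chainBlock k c (blockPerm (chainBlock k c) ⟨m + 1, h⟩) =
        chainBlock k c (blockPerm (chainBlock k c) ⟨m, hm⟩) + 1 := by
  rcases blockPerm_consec (chainBlock k c) hm h with hlt | ⟨heq, _⟩
  · right
    by_contra hne
    have hgap : chainBlock k c (blockPerm (chainBlock k c) ⟨m, hm⟩) + 1 <
        chainBlock k c (blockPerm (chainBlock k c) ⟨m + 1, h⟩) := by omega
    have hjk : chainBlock k c (blockPerm (chainBlock k c) ⟨m, hm⟩) + 1 < k :=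
      lt_of_lt_of_le hgap (le_of_lt (chainBlock_lt hc h0 h1 _))
    obtain ⟨x, hx⟩ := chainBlock_surj hc h0 h1 hjk
    have hr : blockPerm (chainBlock k c) ((blockPerm (chainBlock k c))⁻¹ x) = x :=
      Equiv.apply_symm_apply _ x
    rcases Nat.lt_or_ge (((blockPerm (chainBlock k c))⁻¹ x : Fin n) : ℕ) (m + 1) with h2 | h2
    · have hmono : chainBlock k c (blockPerm (chainBlock k c)
          ((blockPerm (chainBlock k c))⁻¹ x)) ≤
            chainBlock k c (blockPerm (chainBlock k c) ⟨m, hm⟩) :=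
        blockPerm_g_mono _ (by rw [Fin.le_def]; simp [Equiv.Perm.inv_def] at h2 ⊢; omega)
      rw [hr, hx] at hmono; omega
    · have hmono : chainBlock k c (blockPerm (chainBlock k c) ⟨m + 1, h⟩) ≤
          chainBlock k c (blockPerm (chainBlock k c)
            ((blockPerm (chainBlock k c))⁻¹ x)) :=
        blockPerm_g_mono _ (by rw [Fin.le_def]; simp [Equiv.Perm.inv_def] at h2 ⊢; omega)
      rw [hr, hx] at hmono; omega
  · left; omega

lemma chain_mem_B {m : ℕ} (hm : m < n) (h1' : m + 1 < n) :
    (⟨m, hm⟩ : Fin n) ∈ posSet n \ phiS k c ↔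
      chainBlock k c (blockPerm (chainBlock k c) ⟨m + 1, h1'⟩) ≠
        chainBlock k c (blockPerm (chainBlock k c) ⟨m, hm⟩) := by
  rw [mem_sdiff, mem_posSet, mem_phiS]
  constructor
  · rintro ⟨_, h2⟩ hcontra
    exact h2 ⟨h1', hcontra⟩
  · intro h2
    refine ⟨h1', ?_⟩
    rintro ⟨h', hc'⟩
    exact h2 hc'

lemma chain_bIdx : ∀ (m : ℕ) (hm : m < n),
    bIdx (posSet n \ phiS k c) ⟨m, hm⟩ =
      chainBlock k c (blockPerm (chainBlock k c) ⟨m, hm⟩) := by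
  intro m
  induction m with
  | zero => intro hm; rw [bIdx_zero _ hn, chain_gw_zero hn hc h0 h1]
  | succ m ih =>
    intro hm
    have hm' : m < n := by omega
    have hstep := bIdx_succ (posSet n \ phiS k c) ⟨m, hm'⟩ (by simpa using hm)
    have hstep' : bIdx (posSet n \ phiS k c) ⟨m + 1, hm⟩ =
        bIdx (posSet n \ phiS k c) ⟨m, hm'⟩ +
          if (⟨m, hm'⟩ : Fin n) ∈ posSet n \ phiS k c then 1 else 0 := hstep
    rw [hstep', ih hm']
    rcases chain_gw_step hn hc h0 h1 hm' hm with heq | hsu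
    · have hnB : (⟨m, hm'⟩ : Fin n) ∉ posSet n \ phiS k c := by
        rw [chain_mem_B hn hc h0 h1 hm' hm]
        push_neg
        exact heq
      rw [if_neg hnB, heq, Nat.add_zero]
    · have hB : (⟨m, hm'⟩ : Fin n) ∈ posSet n \ phiS k c := by
        rw [chain_mem_B hn hc h0 h1 hm' hm]
        omega
      rw [if_pos hB, hsu]

lemma chain_card_S : (phiS k c).card = n - k ∧ k ≤ n := by
  have hk := chain_k_pos hn hc h0 h1
  have hSsub : phiS k c ⊆ posSet n := by
    intro p hp
    obtain ⟨h, _⟩ := mem_phiS.1 hp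
    exact mem_posSet.2 h
  have hBcard : (posSet n \ phiS k c).card = k - 1 := by
    rw [(bIdx_last hn sdiff_subset).symm, chain_bIdx hn hc h0 h1 (n - 1) (by omega),
      chain_gw_last hn hc h0 h1 (by omega)]
  have h2 : (posSet n \ phiS k c).card = (posSet n).card - (phiS k c).card :=
    card_sdiff_of_subset hSsub
  have h3 : (phiS k c).card ≤ (posSet n).card := card_le_card hSsub
  rw [card_posSet hn] at h2 h3
  omega

lemma rt1 : psi (blockPerm (chainBlock k c)) (phiS k c) = ⟨k, c⟩ := by
  obtain ⟨hcard, hkn⟩ := chain_card_S hn hc h0 h1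
  have hk := chain_k_pos hn hc h0 h1
  apply sigma_eq_helper (by omega)
  intro j
  ext x
  simp only [mem_filter, mem_univ, true_and]
  set w := blockPerm (chainBlock k c) with hw
  have hval : ((Fin.cast (by omega) j : Fin (n - (phiS k c).card + 1)) : ℕ) = (j : ℕ) := rfl
  rw [hval]
  have hfix : bIdx (posSet n \ phiS k c) (w⁻¹ x) = chainBlock k c x := by
    have := chain_bIdx hn hc h0 h1 ((w⁻¹ x : Fin n) : ℕ) (w⁻¹ x).isLt
    have heta : (⟨((w⁻¹ x : Fin n) : ℕ), (w⁻¹ x).isLt⟩ : Fin n) = w⁻¹ x := Fin.eta _ _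
    rw [heta] at this
    rw [this, Equiv.Perm.inv_def, Equiv.apply_symm_apply]
  rw [hfix]
  exact chainBlock_lt_iff hc h0 h1 x j

end ChainFacts



/-! ### psi-side facts -/

section PsiFacts

variable (hn : 0 < n) {w : Equiv.Perm (Fin n)} {S : Finset (Fin n)} (hS : S ⊆ desSet w)

include hn hS

lemma psi_card_facts :
    S.card ≤ n - 1 ∧ (posSet n \ S).card = n - S.card - 1 := by
  have hSsub : S ⊆ posSet n := hS.trans (desSet_subset_posSet w)
  have h2 : (posSet n \ S).card = (posSet n).card - S.card := card_sdiff_of_subset hSsub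
  have h3 : S.card ≤ (posSet n).card := card_le_card hSsub
  rw [card_posSet hn] at h2 h3
  omega

lemma psi_chainBlock (x : Fin n) :
    chainBlock (n - S.card) (psi w S).2 x = bIdx (posSet n \ S) (w⁻¹ x) := by
  obtain ⟨hcard, hBcard⟩ := psi_card_facts hn hS
  apply chainBlock_eq_of
  · have := bIdx_le_card (posSet n \ S) (w⁻¹ x)
    omega
  · intro j
    show x ∈ univ.filter (fun x => bIdx (posSet n \ S) (w⁻¹ x) < (j : ℕ)) ↔ _
    simp [mem_filter]

lemma psi_blockPerm : blockPerm (chainBlock (n - S.card) (psi w S).2) = w := by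
  obtain ⟨hcard, hBcard⟩ := psi_card_facts hn hS
  refine (blockPerm_unique ?_).symm
  apply fin_strictMono_of_consec
  intro m h
  have hm : m < n := by omega
  show kap n _ (w ⟨m, by omega⟩) < kap n _ (w ⟨m + 1, h⟩)
  have e1 : chainBlock (n - S.card) (psi w S).2 (w ⟨m, by omega⟩) =
      bIdx (posSet n \ S) ⟨m, hm⟩ := by
    rw [psi_chainBlock hn hS, Equiv.Perm.inv_def, Equiv.symm_apply_apply]
  have e2 : chainBlock (n - S.card) (psi w S).2 (w ⟨m + 1, h⟩) =
      bIdx (posSet n \ S) ⟨m + 1, h⟩ := by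
    rw [psi_chainBlock hn hS, Equiv.Perm.inv_def, Equiv.symm_apply_apply]
  have hstep := bIdx_succ (posSet n \ S) ⟨m, hm⟩ h
  have hstep' : bIdx (posSet n \ S) ⟨m + 1, h⟩ =
      bIdx (posSet n \ S) ⟨m, hm⟩ +
        if (⟨m, hm⟩ : Fin n) ∈ posSet n \ S then 1 else 0 := hstep
  by_cases hB : (⟨m, hm⟩ : Fin n) ∈ posSet n \ S
  · rw [if_pos hB] at hstep'
    apply kap_lt_of_lt
    rw [e1, e2, hstep']
    omega
  · have hpS : (⟨m, hm⟩ : Fin n) ∈ S := by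
      by_contra hns
      exact hB (mem_sdiff.2 ⟨mem_posSet.2 (by simpa using h), hns⟩)
    obtain ⟨h', hdes⟩ := (mem_filter.1 (hS hpS)).2
    rw [if_neg hB] at hstep'
    apply kap_lt_of_eq
    · rw [e1, e2, hstep']; omega
    · exact hdes

lemma psi_phiS : phiS (n - S.card) (psi w S).2 = S := by
  obtain ⟨hcard, hBcard⟩ := psi_card_facts hn hS
  ext p
  refine Iff.trans mem_phiS ?_
  constructor
  · rintro ⟨h, heq⟩
    rw [psi_blockPerm hn hS] at heq
    have e1 := psi_chainBlock hn hS (w ⟨(p : ℕ) + 1, h⟩)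
    have e2 := psi_chainBlock hn hS (w p)
    rw [e1, e2, Equiv.Perm.inv_def, Equiv.symm_apply_apply, Equiv.symm_apply_apply] at heq
    have hstep : bIdx (posSet n \ S) ⟨(p : ℕ) + 1, h⟩ =
        bIdx (posSet n \ S) p + if p ∈ posSet n \ S then 1 else 0 :=
      bIdx_succ (posSet n \ S) p h
    by_cases hB : p ∈ posSet n \ S
    · rw [if_pos hB] at hstep
      omega
    · by_contra hns
      exact hB (mem_sdiff.2 ⟨mem_posSet.2 h, hns⟩)
  · intro hpS
    have hppos := mem_posSet.1 (hS.trans (desSet_subset_posSet w) hpS)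
    refine ⟨hppos, ?_⟩
    rw [psi_blockPerm hn hS]
    have e1 := psi_chainBlock hn hS (w ⟨(p : ℕ) + 1, hppos⟩)
    have e2 := psi_chainBlock hn hS (w p)
    rw [e1, e2, Equiv.Perm.inv_def, Equiv.symm_apply_apply, Equiv.symm_apply_apply]
    have hstep : bIdx (posSet n \ S) ⟨(p : ℕ) + 1, hppos⟩ =
        bIdx (posSet n \ S) p + if p ∈ posSet n \ S then 1 else 0 :=
      bIdx_succ (posSet n \ S) p hppos
    have hB : p ∉ posSet n \ S := fun hB => (mem_sdiff.1 hB).2 hpS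
    rw [if_neg hB] at hstep
    omega

lemma rt2 : phi (psi w S).1 (psi w S).2 = ⟨w, S⟩ := by
  show (⟨blockPerm (chainBlock (n - S.card) (psi w S).2),
    phiS (n - S.card) (psi w S).2⟩ : Σ _ : Equiv.Perm (Fin n), Finset (Fin n)) = ⟨w, S⟩
  rw [psi_phiS hn hS, psi_blockPerm hn hS]

lemma psi_valid :
    StrictMono (psi w S).2 ∧ (psi w S).2 0 = ⊥ ∧
      (psi w S).2 (Fin.last (n - S.card)) = ⊤ := by
  obtain ⟨hcard, hBcard⟩ := psi_card_facts hn hS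
  refine ⟨?_, ?_, ?_⟩
  · apply Fin.strictMono_iff_lt_succ.2
    intro i
    have hle : (psi w S).2 i.castSucc ⊆ (psi w S).2 i.succ := by
      intro x hx
      simp only [psi, mem_filter, mem_univ, true_and,
        Fin.coe_castSucc, Fin.val_succ] at hx ⊢
      have hx' : bIdx (posSet n \ S) (w⁻¹ x) < (i : ℕ) := hx
      show bIdx (posSet n \ S) (w⁻¹ x) < (i : ℕ) + 1
      omega
    have hival : (i : ℕ) ≤ (posSet n \ S).card := by
      have h2 := i.isLt
      have hfst : (psi w S).fst = n - S.card := rfl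
      omega
    obtain ⟨p, hp⟩ := bIdx_attain hn sdiff_subset hival
    have hxin : w p ∈ (psi w S).2 i.succ := by
      simp only [psi, mem_filter, mem_univ, true_and, Fin.val_succ,
        Equiv.Perm.inv_def, Equiv.symm_apply_apply]
      show bIdx (posSet n \ S) p < (i : ℕ) + 1
      omega
    have hxout : w p ∉ (psi w S).2 i.castSucc := by
      simp only [psi, mem_filter, mem_univ, true_and, Fin.coe_castSucc,
        Equiv.Perm.inv_def, Equiv.symm_apply_apply]
      show ¬ bIdx (posSet n \ S) p < (i : ℕ)
      omega
    exact lt_iff_le_and_ne.2 ⟨hle, fun hcc => hxout (hcc ▸ hxin)⟩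
  · rw [Finset.bot_eq_empty]
    apply Finset.filter_eq_empty_iff.2
    intro x _
    simp
  · rw [Finset.top_eq_univ]
    apply Finset.filter_true_of_mem
    intro x _
    have := bIdx_le_card (posSet n \ S) (w⁻¹ x)
    show bIdx (posSet n \ S) (w⁻¹ x) < (Fin.last (n - S.card) : ℕ)
    rw [Fin.val_last]
    omega

end PsiFacts



/-! ### algebraic lemmas -/

lemma phiS_subset_desSet (k : ℕ) (c : Fin (k + 1) → Finset (Fin n)) :
    phiS k c ⊆ desSet (blockPerm (chainBlock k c)) := by
  intro p hp
  obtain ⟨h, heq⟩ := mem_phiS.1 hp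
  have hcons := blockPerm_consec (chainBlock k c) p.isLt h
  have heta : (⟨(p : ℕ), p.isLt⟩ : Fin n) = p := Fin.eta p p.isLt
  rw [heta] at hcons
  rcases hcons with hlt | ⟨_, hdes⟩
  · omega
  · exact mem_filter.2 ⟨mem_univ _, ⟨h, hdes⟩⟩

lemma inner_sum {A B : Finset (Fin n)} (hAB : A ⊆ B) (q : ℚ) :
    ∑ F ∈ univ.filter (fun F : Finset (Fin n) => A ⊆ F ∧ F ⊆ B),
      (-1 : ℚ) ^ (F.card - A.card) * q ^ (B.card - F.card) =
      (q - 1) ^ (B.card - A.card) := by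
  have key : ∑ F ∈ univ.filter (fun F : Finset (Fin n) => A ⊆ F ∧ F ⊆ B),
      (-1 : ℚ) ^ (F.card - A.card) * q ^ (B.card - F.card) =
      ∑ T ∈ (B \ A).powerset, (-1 : ℚ) ^ T.card * q ^ ((B \ A).card - T.card) := by
    apply Finset.sum_bij' (fun F _ => F \ A) (fun T _ => A ∪ T)
    · intro F hF
      rw [mem_filter] at hF
      exact mem_powerset.2 (sdiff_subset_sdiff hF.2.2 (Finset.Subset.refl A))
    · intro T hT
      rw [mem_powerset] at hT
      rw [mem_filter]
      exact ⟨mem_univ _, Finset.subset_union_left,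
        Finset.union_subset hAB (hT.trans sdiff_subset)⟩
    · intro F hF
      rw [mem_filter] at hF
      exact Finset.union_sdiff_of_subset hF.2.1
    · intro T hT
      rw [mem_powerset] at hT
      rw [Finset.union_sdiff_cancel_left]
      exact Finset.disjoint_left.2 (fun a haA haT => (mem_sdiff.1 (hT haT)).2 haA)
    · intro F hF
      rw [mem_filter] at hF
      obtain ⟨_, h1, h2⟩ := hF
      have e1 : (F \ A).card = F.card - A.card := card_sdiff_of_subset h1
      have e2 : (B \ A).card = B.card - A.card := card_sdiff_of_subset hAB
      have e3 : A.card ≤ F.card := card_le_card h1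
      have e4 : F.card ≤ B.card := card_le_card h2
      have e5 : B.card - F.card = (B.card - A.card) - (F.card - A.card) := by omega
      rw [e1, e2, ← e5]
  rw [key]
  have expand := Finset.prod_add (fun _ : Fin n => (-1 : ℚ)) (fun _ => q) (B \ A)
  rw [Finset.prod_const] at expand
  have e2 : (B \ A).card = B.card - A.card := card_sdiff_of_subset hAB
  have hps : ∑ T ∈ (B \ A).powerset, (-1 : ℚ) ^ T.card * q ^ ((B \ A).card - T.card) =
      ∑ T ∈ (B \ A).powerset, (∏ _i ∈ T, (-1 : ℚ)) * ∏ _i ∈ (B \ A) \ T, q := by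
    apply Finset.sum_congr rfl
    intro T hT
    rw [mem_powerset] at hT
    rw [Finset.prod_const, Finset.prod_const, card_sdiff_of_subset hT]
  have hbase : (-1 : ℚ) + q = q - 1 := by ring
  rw [hps, ← expand, hbase, e2]

lemma tel_sum {k : ℕ} (a : ℕ → ℕ) (hmono : ∀ i j, i ≤ j → j ≤ k → a i ≤ a j) :
    ∑ i ∈ Finset.range k, (a (i + 1) - a i) = a k - a 0 := by
  induction k with
  | zero => simp
  | succ m ih =>
    rw [Finset.sum_range_succ, ih (fun i j hij hjk => hmono i j hij (by omega))]
    have h1 : a 0 ≤ a m := hmono 0 m (Nat.zero_le _) (by omega)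
    have h2 : a m ≤ a (m + 1) := hmono m (m + 1) (by omega) (by omega)
    omega

lemma eulerian_expand {α : Type*} (q : ℚ) (s : Finset α) :
    q ^ s.card = ∑ T ∈ s.powerset, (q - 1) ^ T.card := by
  classical
  have expand := Finset.prod_add (fun _ : α => (q - 1)) (fun _ => (1 : ℚ)) s
  rw [Finset.prod_const, sub_add_cancel] at expand
  rw [expand]
  apply Finset.sum_congr rfl
  intro T _
  rw [Finset.prod_const, Finset.prod_const, one_pow, mul_one]

lemma chain_term (hn : 0 < n) {k : ℕ} {c : Fin (k + 1) → Finset (Fin n)}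
    (hc : StrictMono c) (h0 : c 0 = ⊥) (h1 : c (Fin.last k) = ⊤)
    (q : ℚ) (hq : q ≠ 1) :
    (∏ i : Fin k,
      (∑ F ∈ Finset.univ.filter fun F : Finset (Fin n) =>
          c i.castSucc ⊆ F ∧ F ⊆ c i.succ,
        (-1 : ℚ) ^ (F.card - (c i.castSucc).card) *
          q ^ ((c i.succ).card - F.card)) / (q - 1)) = (q - 1) ^ (n - k) := by
  have hq1 : q - 1 ≠ 0 := sub_ne_zero.2 hq
  have step1 : ∀ i : Fin k,
      (∑ F ∈ Finset.univ.filter fun F : Finset (Fin n) =>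
          c i.castSucc ⊆ F ∧ F ⊆ c i.succ,
        (-1 : ℚ) ^ (F.card - (c i.castSucc).card) *
          q ^ ((c i.succ).card - F.card)) / (q - 1) =
        (q - 1) ^ ((c i.succ).card - (c i.castSucc).card - 1) := by
    intro i
    have hsub : c i.castSucc ⊆ c i.succ :=
      hc.monotone (Fin.castSucc_le_succ i)
    have hlt : (c i.castSucc).card < (c i.succ).card :=
      card_lt_card (hc (Fin.castSucc_lt_succ (i := i)))
    rw [inner_sum hsub q]
    set m := (c i.succ).card - (c i.castSucc).card with hm
    have hm1 : 1 ≤ m := by omega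
    rw [show m = m - 1 + 1 by omega, pow_succ, mul_div_assoc, div_self hq1, mul_one,
      Nat.add_sub_cancel]
  rw [Finset.prod_congr rfl (fun i _ => step1 i), Finset.prod_pow_eq_pow_sum]
  congr 1
  set a : ℕ → ℕ := fun j => (c ⟨min j k, by omega⟩).card with ha
  have hsummand : ∀ i : Fin k,
      (c i.succ).card - (c i.castSucc).card - 1 = a ((i : ℕ) + 1) - a (i : ℕ) - 1 := by
    intro i
    have hik := i.isLt
    have e1 : (⟨min ((i : ℕ) + 1) k, by omega⟩ : Fin (k + 1)) = i.succ := by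
      apply Fin.ext
      simp only [Fin.val_succ]
      omega
    have e2 : (⟨min (i : ℕ) k, by omega⟩ : Fin (k + 1)) = i.castSucc := by
      apply Fin.ext
      simp only [Fin.coe_castSucc]
      omega
    rw [ha]
    simp only []
    rw [e1, e2]
  rw [Finset.sum_congr rfl (fun i _ => hsummand i)]
  have hconv : ∑ i : Fin k, (a ((i : ℕ) + 1) - a (i : ℕ) - 1) =
      ∑ i ∈ Finset.range k, (a (i + 1) - a i - 1) :=
    Fin.sum_univ_eq_sum_range (fun j => a (j + 1) - a j - 1) k
  rw [hconv]
  have hamono : ∀ i j, i ≤ j → j ≤ k → a i ≤ a j := by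
    intro i j hij hjk
    apply card_le_card
    apply hc.monotone
    rw [Fin.mk_le_mk]
    omega
  have hstep : ∀ i ∈ Finset.range k, (1 : ℕ) ≤ a (i + 1) - a i := by
    intro i hi
    rw [Finset.mem_range] at hi
    have : a i < a (i + 1) := by
      apply card_lt_card
      apply hc
      rw [Fin.mk_lt_mk]
      omega
    omega
  have hsplit : ∑ i ∈ Finset.range k, (a (i + 1) - a i - 1) =
      (∑ i ∈ Finset.range k, (a (i + 1) - a i)) - ∑ i ∈ Finset.range k, 1 :=
    Finset.sum_tsub_distrib _ hstep
  rw [hsplit, tel_sum a hamono, Finset.sum_const, Finset.card_range, smul_eq_mul, mul_one]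
  have ha0 : a 0 = 0 := by
    have : (⟨min 0 k, by omega⟩ : Fin (k + 1)) = 0 := by
      apply Fin.ext; simp only [Fin.val_zero]; omega
    rw [ha]; simp only []; rw [this, h0, Finset.bot_eq_empty, Finset.card_empty]
  have hak : a k = n := by
    have : (⟨min k k, by omega⟩ : Fin (k + 1)) = Fin.last k := by
      apply Fin.ext; simp only [Fin.val_last]; omega
    rw [ha]; simp only []; rw [this, h1, Finset.top_eq_univ, card_univ, Fintype.card_fin]
  omega



end Stmt14Aux


set_option maxHeartbeats 2000000 in
/-- For the Boolean lattice `Bₙ` of subsets of `{1,…,n}`, the Chow polynomial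
`H̲_{Bₙ}(q) = ∑_C ∏ᵢ χ̄_{[Cᵢ,Cᵢ₊₁]}(q)` — summing over all chains
`⊥ = C₁ ⊂ ⋯ ⊂ C_{k+1} = ⊤` (encoded as strictly monotone maps
`Fin (k+1) → Finset (Fin n)`), with Möbius function `μ(x,F) = (-1)^{|F|-|x|}`
and rank given by cardinality — equals the `n`-th Eulerian polynomial
`Aₙ(q) = ∑_{w ∈ Sₙ} q^{des(w)}`. -/
theorem stmt14 (n : ℕ) (q : ℚ) (hq : q ≠ 1) :
    (∑ k ∈ Finset.range (Fintype.card (Finset (Fin n)) + 1),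
      ∑ c ∈ Finset.univ.filter fun c : Fin (k + 1) → Finset (Fin n) =>
          StrictMono c ∧ c 0 = ⊥ ∧ c (Fin.last k) = ⊤,
        ∏ i : Fin k,
          (∑ F ∈ Finset.univ.filter fun F : Finset (Fin n) =>
              c i.castSucc ⊆ F ∧ F ⊆ c i.succ,
            (-1 : ℚ) ^ (F.card - (c i.castSucc).card) *
              q ^ ((c i.succ).card - F.card)) / (q - 1)) =
      ∑ w : Equiv.Perm (Fin n),
        q ^ (Finset.univ.filter fun i : Fin n =>
          ∃ h : (i : ℕ) + 1 < n, w ⟨(i : ℕ) + 1, h⟩ < w i).card := by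
  classical
  rcases Nat.eq_zero_or_pos n with rfl | hn
  · -- n = 0
    have hcard : Fintype.card (Finset (Fin 0)) = 1 := by
      simp [Fintype.card_finset]
    rw [hcard, Finset.sum_range_succ, Finset.sum_range_one]
    have hfull : (Finset.univ.filter fun c : Fin 1 → Finset (Fin 0) =>
        StrictMono c ∧ c 0 = ⊥ ∧ c (Fin.last 0) = ⊤) = Finset.univ := by
      apply Finset.filter_true_of_mem
      intro c _
      refine ⟨fun a b hab => absurd hab (by omega), ?_, ?_⟩
      · rw [Finset.bot_eq_empty]; exact Finset.eq_empty_of_isEmpty _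
      · rw [Finset.top_eq_univ]
        rw [Finset.eq_empty_of_isEmpty (c (Fin.last 0)),
          Finset.eq_empty_of_isEmpty (Finset.univ : Finset (Fin 0))]
    have hempty : (Finset.univ.filter fun c : Fin 2 → Finset (Fin 0) =>
        StrictMono c ∧ c 0 = ⊥ ∧ c (Fin.last 1) = ⊤) = ∅ := by
      rw [Finset.filter_eq_empty_iff]
      rintro c _ ⟨hsm, hb, ht⟩
      have h01 : (0 : Fin 2) < 1 := by omega
      have := hsm h01
      rw [show (1 : Fin 2) = Fin.last 1 from rfl, hb, ht] at this
      rw [Finset.bot_eq_empty, Finset.top_eq_univ,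
        Finset.eq_empty_of_isEmpty (Finset.univ : Finset (Fin 0))] at this
      exact absurd this (lt_irrefl _)
    rw [hfull, hempty, Finset.sum_empty]
    have hdes : ∀ w : Equiv.Perm (Fin 0),
        (Finset.univ.filter fun i : Fin 0 =>
          ∃ h : (i : ℕ) + 1 < 0, w ⟨(i : ℕ) + 1, h⟩ < w i) = ∅ :=
      fun w => Finset.eq_empty_of_isEmpty _
    simp only [hdes, Finset.card_empty, pow_zero, Finset.univ_eq_empty,
      Finset.prod_empty]
    simp [Fintype.card_finset]
  · -- main case
    open Stmt14Aux in
    calc (∑ k ∈ Finset.range (Fintype.card (Finset (Fin n)) + 1),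
      ∑ c ∈ Finset.univ.filter fun c : Fin (k + 1) → Finset (Fin n) =>
          StrictMono c ∧ c 0 = ⊥ ∧ c (Fin.last k) = ⊤,
        ∏ i : Fin k,
          (∑ F ∈ Finset.univ.filter fun F : Finset (Fin n) =>
              c i.castSucc ⊆ F ∧ F ⊆ c i.succ,
            (-1 : ℚ) ^ (F.card - (c i.castSucc).card) *
              q ^ ((c i.succ).card - F.card)) / (q - 1))
        = ∑ k ∈ Finset.range (Fintype.card (Finset (Fin n)) + 1),
            ∑ c ∈ Finset.univ.filter fun c : Fin (k + 1) → Finset (Fin n) =>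
              StrictMono c ∧ c 0 = ⊥ ∧ c (Fin.last k) = ⊤,
              (q - 1) ^ (n - k) := by
          apply Finset.sum_congr rfl
          intro k _
          apply Finset.sum_congr rfl
          intro c hcmem
          rw [Finset.mem_filter] at hcmem
          obtain ⟨-, hcmono, hc0, hc1⟩ := hcmem
          exact chain_term hn hcmono hc0 hc1 q hq
      _ = ∑ x ∈ (Finset.range (Fintype.card (Finset (Fin n)) + 1)).sigma
            (fun k => Finset.univ.filter fun c : Fin (k + 1) → Finset (Fin n) =>
              StrictMono c ∧ c 0 = ⊥ ∧ c (Fin.last k) = ⊤),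
            (q - 1) ^ (n - x.1) :=
          (Finset.sum_sigma (Finset.range (Fintype.card (Finset (Fin n)) + 1))
            (fun k => Finset.univ.filter fun c : Fin (k + 1) → Finset (Fin n) =>
              StrictMono c ∧ c 0 = ⊥ ∧ c (Fin.last k) = ⊤)
            (fun x => (q - 1) ^ (n - x.1))).symm
      _ = ∑ y ∈ (Finset.univ : Finset (Equiv.Perm (Fin n))).sigma
            (fun w => (desSet w).powerset), (q - 1) ^ (y.2.card) := by
          refine Finset.sum_bij' (fun a _ => phi a.1 a.2) (fun b _ => psi b.1 b.2)
            ?_ ?_ ?_ ?_ ?_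
          · rintro ⟨k, c⟩ _
            exact Finset.mem_sigma.2 ⟨Finset.mem_univ _,
              Finset.mem_powerset.2 (phiS_subset_desSet k c)⟩
          · rintro ⟨w, S⟩ hb
            rw [Finset.mem_sigma, Finset.mem_powerset] at hb
            refine Finset.mem_sigma.2 ⟨?_, ?_⟩
            · apply Finset.mem_range.2
              have h2 : Fintype.card (Finset (Fin n)) = 2 ^ n := by
                simp [Fintype.card_finset]
              have h3 : n < 2 ^ n := Nat.lt_two_pow_self
              show n - S.card < _
              omega
            · obtain ⟨hsm, h0, h1⟩ := psi_valid hn hb.2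
              exact Finset.mem_filter.2 ⟨Finset.mem_univ _, hsm, h0, h1⟩
          · rintro ⟨k, c⟩ ha
            rw [Finset.mem_sigma, Finset.mem_filter] at ha
            obtain ⟨-, -, hcmono, hc0, hc1⟩ := ha
            exact rt1 hn hcmono hc0 hc1
          · rintro ⟨w, S⟩ hb
            rw [Finset.mem_sigma, Finset.mem_powerset] at hb
            exact rt2 hn hb.2
          · rintro ⟨k, c⟩ ha
            rw [Finset.mem_sigma, Finset.mem_filter] at ha
            obtain ⟨-, -, hcmono, hc0, hc1⟩ := ha
            have := (chain_card_S hn hcmono hc0 hc1).1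
            show (q - 1) ^ (n - k) = (q - 1) ^ ((phiS k c).card)
            rw [this]
      _ = ∑ w : Equiv.Perm (Fin n), ∑ T ∈ (desSet w).powerset, (q - 1) ^ T.card :=
          Finset.sum_sigma (Finset.univ : Finset (Equiv.Perm (Fin n)))
            (fun w => (desSet w).powerset) (fun y => (q - 1) ^ (y.2.card))
      _ = ∑ w : Equiv.Perm (Fin n),
          q ^ (Finset.univ.filter fun i : Fin n =>
            ∃ h : (i : ℕ) + 1 < n, w ⟨(i : ℕ) + 1, h⟩ < w i).card := by
          apply Finset.sum_congr rfl
          intro w _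
          exact (eulerian_expand q (desSet w)).symm
end

section
/- Under the substitution a ↦ 1, b ↦ x, y ↦ -x, the word-rewriting ω (which replaces each occurrence of the noncommutative pattern ab by ab + y·ba + y·ab + y²·ba and then each remaining a by a + y·b and each remaining b by b + y·a) sends every ab-monomial u = u₀u₁...u_{n-1} starting with a whose descent positions (positions of b) contain two consecutive indices to 0; if the descent positions D of u are isolated (no two consecutive) then the image equals (1-x)ⁿ·x^{|D|}·(1+x)^{n-2|D|}. -/
open Polynomial

/-- The commutative value assigned to position `i` of an `ab`-word
`u ∈ {a,b}ⁿ` (encoded as `u : Fin n → Bool` with `false = a`, `true = b`)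
under the substitution `ω` followed by `a ↦ 1`, `b ↦ x`, `y ↦ -x`: each
(greedily matched, i.e. each) factor `ab` contributes `x(1-x)²` (recorded at
its `b`-position, `1` at its `a`-position), each remaining `a` contributes
`(1+x)(1-x)`, and each remaining `b` contributes `0`. -/
noncomputable def wordVal {n : ℕ} (u : Fin n → Bool) (i : Fin n) :
    Polynomial ℤ :=
  if u i = true then
    if (i : ℕ) = 0 then 0
    else if u ⟨(i : ℕ) - 1, Nat.lt_of_le_of_lt (Nat.sub_le _ _) i.isLt⟩ = true
      then 0
    else X * (1 - X) ^ 2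
  else
    if h : (i : ℕ) + 1 < n then
      if u ⟨(i : ℕ) + 1, h⟩ = true then 1 else (1 + X) * (1 - X)
    else (1 + X) * (1 - X)

/-- Under `a ↦ 1`, `b ↦ x`, `y ↦ -x`, the substitution `ω` sends an
`ab`-monomial `u = u₀⋯u_{n-1}` with `u₀ = a` to `0` whenever its set `D` of
`b`-positions contains two consecutive indices, and to
`(1-x)ⁿ·x^{|D|}·(1+x)^{n-2|D|}` whenever `D` is isolated. -/
theorem stmt16 (n : ℕ) (hn : 0 < n) (u : Fin n → Bool)
    (h0 : u ⟨0, hn⟩ = false) :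
    ((∃ i : Fin n, ∃ h : (i : ℕ) + 1 < n,
        u i = true ∧ u ⟨(i : ℕ) + 1, h⟩ = true) →
      ∏ i : Fin n, wordVal u i = 0) ∧
    ((∀ i : Fin n, ∀ h : (i : ℕ) + 1 < n,
        ¬(u i = true ∧ u ⟨(i : ℕ) + 1, h⟩ = true)) →
      ∏ i : Fin n, wordVal u i =
        (1 - X) ^ n *
          X ^ (Finset.univ.filter fun i : Fin n => u i = true).card *
          (1 + X) ^
            (n - 2 * (Finset.univ.filter fun i : Fin n => u i = true).card)) := by
  classical
  constructor
  · rintro ⟨i, h, hi, hi1⟩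
    apply Finset.prod_eq_zero (Finset.mem_univ (⟨(i : ℕ) + 1, h⟩ : Fin n))
    have hp : u ⟨((i : ℕ) + 1) - 1,
        Nat.lt_of_le_of_lt (Nat.sub_le _ _) (Fin.isLt ⟨(i : ℕ) + 1, h⟩)⟩ = true := by
      have : (⟨((i : ℕ) + 1) - 1, Nat.lt_of_le_of_lt (Nat.sub_le _ _)
          (Fin.isLt ⟨(i : ℕ) + 1, h⟩)⟩ : Fin n) = i := by
        ext; simp
      rw [this]; exact hi
    simp only [wordVal, hi1, if_true, hp]
    simp
  · intro hiso
    set B : Finset (Fin n) := Finset.univ.filter fun i : Fin n => u i = true with hBdef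
    set P : Finset (Fin n) := Finset.univ.filter
      (fun i : Fin n => u i = false ∧ ∃ h : (i : ℕ) + 1 < n, u ⟨(i : ℕ) + 1, h⟩ = true)
      with hPdef
    set k := B.card with hk
    -- every b-position is nonzero and has an a before it
    have hBne : ∀ i ∈ B, (i : ℕ) ≠ 0 := by
      intro i hi hi0
      have : i = ⟨0, hn⟩ := by ext; exact hi0
      rw [hBdef, Finset.mem_filter] at hi
      rw [this, h0] at hi
      simp at hi
    have hBpred : ∀ i ∈ B,
        u ⟨(i : ℕ) - 1, Nat.lt_of_le_of_lt (Nat.sub_le _ _) i.isLt⟩ = false := by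
      intro i hi
      rw [hBdef, Finset.mem_filter] at hi
      have h1 : 1 ≤ (i : ℕ) := Nat.one_le_iff_ne_zero.mpr (hBne i (by rw [hBdef, Finset.mem_filter]; exact hi))
      have hlt : ((i : ℕ) - 1) + 1 < n := by
        rw [Nat.sub_add_cancel h1]; exact i.isLt
      have := hiso ⟨(i : ℕ) - 1, Nat.lt_of_le_of_lt (Nat.sub_le _ _) i.isLt⟩ hlt
      have heq : (⟨((i : ℕ) - 1) + 1, hlt⟩ : Fin n) = i := by
        ext; simp [Nat.sub_add_cancel h1]
      rw [heq] at this
      rcases Bool.eq_false_or_eq_true (u ⟨(i : ℕ) - 1, Nat.lt_of_le_of_lt (Nat.sub_le _ _) i.isLt⟩) with ht | hf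
      · exact absurd ⟨ht, hi.2⟩ this
      · exact hf
    have hBval : ∀ i ∈ B, wordVal u i = X * (1 - X) ^ 2 := by
      intro i hi
      have hit : u i = true := by rw [hBdef, Finset.mem_filter] at hi; exact hi.2
      simp only [wordVal, hit, if_true, hBne i hi, if_false, hBpred i hi]
      simp
    have hPval : ∀ i ∈ P, wordVal u i = 1 := by
      intro i hi
      rw [hPdef, Finset.mem_filter] at hi
      obtain ⟨-, hif, h, hsucc⟩ := hi
      simp only [wordVal, hif]
      rw [dif_pos h, if_pos hsucc]
      simp
    have hRval : ∀ i ∈ (Finset.univ \ B) \ P, wordVal u i = (1 + X) * (1 - X) := by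
      intro i hi
      rw [Finset.mem_sdiff, Finset.mem_sdiff] at hi
      obtain ⟨⟨-, hiB⟩, hiP⟩ := hi
      rw [hBdef, Finset.mem_filter] at hiB
      have hif : u i = false := by
        rcases Bool.eq_false_or_eq_true (u i) with ht | hf
        · exact absurd ⟨Finset.mem_univ i, ht⟩ hiB
        · exact hf
      rw [hPdef, Finset.mem_filter] at hiP
      simp only [wordVal, hif]
      by_cases h : (i : ℕ) + 1 < n
      · have hs : ¬ u ⟨(i : ℕ) + 1, h⟩ = true := fun hs =>
          hiP ⟨Finset.mem_univ i, hif, h, hs⟩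
        rw [dif_pos h, if_neg hs]
        simp
      · rw [dif_neg h]; simp
    -- P = image of B under pred
    have hPB : P = B.image
        (fun i : Fin n => ⟨(i : ℕ) - 1, Nat.lt_of_le_of_lt (Nat.sub_le _ _) i.isLt⟩) := by
      ext j
      constructor
      · intro hj
        rw [hPdef, Finset.mem_filter] at hj
        obtain ⟨-, -, h, hsucc⟩ := hj
        refine Finset.mem_image.mpr ⟨⟨(j : ℕ) + 1, h⟩, ?_, ?_⟩
        · rw [hBdef, Finset.mem_filter]; exact ⟨Finset.mem_univ _, hsucc⟩
        · ext; simp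
      · intro hj
        obtain ⟨i, hi, rfl⟩ := Finset.mem_image.mp hj
        rw [hPdef, Finset.mem_filter]
        have h1 : 1 ≤ (i : ℕ) := Nat.one_le_iff_ne_zero.mpr (hBne i hi)
        have hlt : ((i : ℕ) - 1) + 1 < n := by
          rw [Nat.sub_add_cancel h1]; exact i.isLt
        refine ⟨Finset.mem_univ _, hBpred i hi, hlt, ?_⟩
        have heq : (⟨((i : ℕ) - 1) + 1, hlt⟩ : Fin n) = i := by
          ext; simp [Nat.sub_add_cancel h1]
        rw [heq]
        rw [hBdef, Finset.mem_filter] at hi; exact hi.2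
    have hinj : Set.InjOn
        (fun i : Fin n => (⟨(i : ℕ) - 1, Nat.lt_of_le_of_lt (Nat.sub_le _ _) i.isLt⟩ : Fin n)) B := by
      intro a ha b hb hab
      have h1a : 1 ≤ (a : ℕ) := Nat.one_le_iff_ne_zero.mpr (hBne a ha)
      have h1b : 1 ≤ (b : ℕ) := Nat.one_le_iff_ne_zero.mpr (hBne b hb)
      have : (a : ℕ) - 1 = (b : ℕ) - 1 := congrArg Fin.val hab
      ext
      omega
    have hPcard : P.card = k := by
      rw [hPB, Finset.card_image_of_injOn hinj]
    have hdisj : Disjoint B P := by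
      rw [Finset.disjoint_left]
      intro a haB haP
      rw [hBdef, Finset.mem_filter] at haB
      rw [hPdef, Finset.mem_filter] at haP
      rw [haB.2] at haP
      simp at haP
    have hPsub : P ⊆ Finset.univ \ B := by
      intro a ha
      rw [Finset.mem_sdiff]
      exact ⟨Finset.mem_univ a, Finset.disjoint_right.mp hdisj ha⟩
    have h2k : 2 * k ≤ n := by
      have := Finset.card_le_card (Finset.union_subset (Finset.subset_univ B) (Finset.subset_univ P) : B ∪ P ⊆ Finset.univ)
      rw [Finset.card_union_of_disjoint hdisj, Finset.card_univ, Fintype.card_fin, hPcard] at this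
      omega
    have hRcard : ((Finset.univ \ B) \ P).card = n - 2 * k := by
      rw [Finset.card_sdiff_of_subset hPsub, Finset.card_sdiff_of_subset (Finset.subset_univ B),
        Finset.card_univ, Fintype.card_fin, hPcard]
      omega
    -- split the product
    rw [← Finset.prod_sdiff (Finset.subset_univ B),
        ← Finset.prod_sdiff hPsub,
        Finset.prod_congr rfl hBval, Finset.prod_congr rfl hPval,
        Finset.prod_congr rfl hRval,
        Finset.prod_const, Finset.prod_const, Finset.prod_const,
        hRcard, hPcard, ← hk]
    have hn2 : 2 * k + (n - 2 * k) = n := by omega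
    calc ((1 + X) * (1 - X)) ^ (n - 2 * k) * 1 ^ k * (X * (1 - X) ^ 2 : Polynomial ℤ) ^ k
        = X ^ k * ((1 - X) ^ (2 * k) * (1 - X) ^ (n - 2 * k)) * (1 + X) ^ (n - 2 * k) := by
          rw [mul_pow, mul_pow, ← pow_mul]; ring
      _ = (1 - X) ^ n * X ^ k * (1 + X) ^ (n - 2 * k) := by
          rw [← pow_add, hn2]; ring
end
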